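/- arXiv:2203.00596 — 8 statements merged into one kernel-verified Lean document; each statement's English description precedes it below -/
import Mathlib

section
/- Let α > 0 and let {a_k} and {b_k} be sequences of positive real numbers indexed by integers N ≤ k ≤ M (with N, M possibly infinite). If {a_k} is strongly decreasing, i.e. sup{a_{k+1}/a_k : N < k < M} < 1, then the two quantities ∑_{k=N}^{M} a_k^α (∑_{i=N}^{k} b_i)^α and ∑_{k=N}^{M} a_k^α b_k^α are equivalent up to multiplicative constants depending only on α and the ratio bound (in particular, ∑_k a_k^α (∑_{i≤k} b_i)^α ≤ C ∑_k a_k^α b_k^α for some constant C depending only on α and sup a_{k+1}/a_k). -/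
/-!
Write `ofReal d = T²` with `T < 1`. Iterating the decay gives `a_k b_i ≤ T^{2(k-i)} a_i b_i` for `i ≤ k`,
so `a_k ∑_{i≤k} b_i ≤ ∑_{i≤k} T^{k-i} · T^{k-i} a_i b_i ≤ (1-T)⁻¹ sup_{i≤k} T^{k-i} a_i b_i`.
Raising to the power `α` and bounding the supremum by the sum yields, for every `α > 0` at once,
`a_k^α (∑_{i≤k} b_i)^α ≤ (1-T)^{-α} ∑_{i≤k} T^{α(k-i)} (a_i b_i)^α`. Summing over `k` and
exchanging the order of summation costs a further factor `(1-T^α)⁻¹`. The reverse inequality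
only uses `b_k ≤ ∑_{i≤k} b_i`.
-/

open scoped ENNReal

namespace ENNReal

theorem tsum_pow_le_inv_one_sub {ι : Type*} (T : ℝ≥0∞) {n : ι → ℕ}
    (hn : Function.Injective n) : ∑' i, T ^ n i ≤ (1 - T)⁻¹ :=
  (tsum_comp_le_tsum_of_injective hn (T ^ ·)).trans_eq (tsum_geometric T)

theorem pow_rpow_comm (T : ℝ≥0∞) (n : ℕ) (α : ℝ) : (T ^ n) ^ α = (T ^ α) ^ n := by
  rw [← rpow_natCast_mul, mul_comm, rpow_mul_natCast]

theorem rpow_tsum_pow_two_mul_le {ι : Type*} {α : ℝ} (hα : 0 < α) (T : ℝ≥0∞) {n : ι → ℕ}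
    (hn : Function.Injective n) (x : ι → ℝ≥0∞) :
    (∑' i, (T ^ 2) ^ n i * x i) ^ α ≤ (1 - T)⁻¹ ^ α * ∑' i, (T ^ α) ^ n i * x i ^ α := by
  set M := ⨆ i, T ^ n i * x i
  have hsum : ∑' i, (T ^ 2) ^ n i * x i ≤ (1 - T)⁻¹ * M :=
    calc ∑' i, (T ^ 2) ^ n i * x i = ∑' i, T ^ n i * (T ^ n i * x i) := by
          simp only [sq, mul_pow, mul_assoc]
      _ ≤ ∑' i, T ^ n i * M := by gcongr with i; exact le_iSup (fun i => T ^ n i * x i) i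
      _ = (∑' i, T ^ n i) * M := ENNReal.tsum_mul_right
      _ ≤ (1 - T)⁻¹ * M := by gcongr; exact tsum_pow_le_inv_one_sub T hn
  have hsup : M ^ α ≤ ∑' i, (T ^ α) ^ n i * x i ^ α := by
    rw [show M ^ α = ⨆ i, (T ^ n i * x i) ^ α from (orderIsoRpow α hα).map_iSup _]
    refine iSup_le fun i => ?_
    rw [mul_rpow_of_nonneg _ _ hα.le, pow_rpow_comm]
    exact ENNReal.le_tsum i
  calc (∑' i, (T ^ 2) ^ n i * x i) ^ α ≤ ((1 - T)⁻¹ * M) ^ α := by gcongr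
    _ = (1 - T)⁻¹ ^ α * M ^ α := mul_rpow_of_nonneg _ _ hα.le
    _ ≤ _ := by gcongr

theorem tsum_tsum_le_comm {β : Type*} [LE β] (S : Set β) (g : β → β → ℝ≥0∞) :
    ∑' k : S, ∑' i : {i // i ∈ S ∧ i ≤ k}, g k i =
      ∑' i : S, ∑' k : {k // k ∈ S ∧ i ≤ k}, g k i := by
  let e : (Σ k : S, {i // i ∈ S ∧ i ≤ k}) ≃ Σ i : S, {k // k ∈ S ∧ i ≤ k} :=
    { toFun := fun p => ⟨⟨p.2, p.2.2.1⟩, ⟨p.1, p.1.2, p.2.2.2⟩⟩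
      invFun := fun p => ⟨⟨p.2, p.2.2.1⟩, ⟨p.1, p.1.2, p.2.2.2⟩⟩
      left_inv := fun _ => rfl
      right_inv := fun _ => rfl }
  calc ∑' k : S, ∑' i : {i // i ∈ S ∧ i ≤ k}, g k i
      = ∑' p : Σ k : S, {i // i ∈ S ∧ i ≤ k}, g p.1 p.2 := by rw [ENNReal.tsum_sigma']
    _ = ∑' p : Σ i : S, {k // k ∈ S ∧ i ≤ k}, g p.2 p.1 := e.tsum_eq fun p => g p.2 p.1
    _ = ∑' i : S, ∑' k : {k // k ∈ S ∧ i ≤ k}, g k i := by rw [ENNReal.tsum_sigma']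

end ENNReal

theorem tsum_tsum_pow_toNat_sub_mul_le (S : Set ℤ) (U : ℝ≥0∞) (x : ℤ → ℝ≥0∞) :
    ∑' k : S, ∑' i : {i // i ∈ S ∧ i ≤ k}, U ^ (k - i : ℤ).toNat * x i ≤
      (1 - U)⁻¹ * ∑' i : S, x i := by
  rw [ENNReal.tsum_tsum_le_comm S fun k i => U ^ (k - i).toNat * x i, ← ENNReal.tsum_mul_left]
  gcongr with i
  rw [ENNReal.tsum_mul_right]
  gcongr
  refine ENNReal.tsum_pow_le_inv_one_sub U fun k l hkl => Subtype.ext ?_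
  have := k.2.2; have := l.2.2
  omega

theorem le_pow_toNat_sub_mul_of_ordConnected {S : Set ℤ} (hS : S.OrdConnected)
    {a : ℤ → ℝ≥0∞} {r : ℝ≥0∞} (hr : ∀ k ∈ S, k + 1 ∈ S → a (k + 1) ≤ r * a k)
    {i k : ℤ} (hi : i ∈ S) (hk : k ∈ S) (hik : i ≤ k) : a k ≤ r ^ (k - i).toNat * a i := by
  induction k, hik using Int.leInduction with
  | base => simp
  | succ k hik ih =>
    have hkS : k ∈ S := hS.out hi hk ⟨hik, by omega⟩
    calc a (k + 1) ≤ r * a k := hr k hkS hk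
      _ ≤ r * (r ^ (k - i).toNat * a i) := by gcongr; exact ih hkS
      _ = r ^ (k + 1 - i).toNat * a i := by
        rw [show (k + 1 - i).toNat = (k - i).toNat + 1 by omega, pow_succ', mul_assoc]

section StronglyDecreasing

variable {α : ℝ} {S : Set ℤ} {a b : ℤ → ℝ≥0∞} {T : ℝ≥0∞}

theorem rpow_mul_tsum_Iic_le (hα : 0 < α) (hS : S.OrdConnected)
    (hT : ∀ k ∈ S, k + 1 ∈ S → a (k + 1) ≤ T ^ 2 * a k) {k : ℤ} (hk : k ∈ S) :
    a k ^ α * (∑' i : {i // i ∈ S ∧ i ≤ k}, b i) ^ α ≤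
      (1 - T)⁻¹ ^ α * ∑' i : {i // i ∈ S ∧ i ≤ k}, (T ^ α) ^ (k - i).toNat * (a i * b i) ^ α := by
  rw [← ENNReal.mul_rpow_of_nonneg _ _ hα.le, ← ENNReal.tsum_mul_left]
  calc (∑' i : {i // i ∈ S ∧ i ≤ k}, a k * b i) ^ α
      ≤ (∑' i : {i // i ∈ S ∧ i ≤ k}, (T ^ 2) ^ (k - i).toNat * (a i * b i)) ^ α := by
        refine ENNReal.rpow_le_rpow (ENNReal.tsum_le_tsum fun i => ?_) hα.le
        rw [← mul_assoc]
        exact mul_le_mul_left (le_pow_toNat_sub_mul_of_ordConnected hS hT i.2.1 hk i.2.2) _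
    _ ≤ _ := by
        refine ENNReal.rpow_tsum_pow_two_mul_le hα T (fun i j hij => Subtype.ext ?_) _
        have := i.2.2; have := j.2.2
        omega

theorem tsum_rpow_mul_tsum_Iic_le (hα : 0 < α) (hS : S.OrdConnected)
    (hT : ∀ k ∈ S, k + 1 ∈ S → a (k + 1) ≤ T ^ 2 * a k) :
    ∑' k : S, a k ^ α * (∑' i : {i // i ∈ S ∧ i ≤ k}, b i) ^ α ≤
      (1 - T)⁻¹ ^ α * (1 - T ^ α)⁻¹ * ∑' k : S, a k ^ α * b k ^ α := by
  calc ∑' k : S, a k ^ α * (∑' i : {i // i ∈ S ∧ i ≤ k}, b i) ^ α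
      ≤ ∑' k : S, (1 - T)⁻¹ ^ α *
          ∑' i : {i // i ∈ S ∧ i ≤ k}, (T ^ α) ^ (k - i : ℤ).toNat * (a i * b i) ^ α :=
        ENNReal.tsum_le_tsum fun k => rpow_mul_tsum_Iic_le hα hS hT k.2
    _ = (1 - T)⁻¹ ^ α * ∑' k : S,
          ∑' i : {i // i ∈ S ∧ i ≤ k}, (T ^ α) ^ (k - i : ℤ).toNat * (a i * b i) ^ α :=
        ENNReal.tsum_mul_left
    _ ≤ (1 - T)⁻¹ ^ α * ((1 - T ^ α)⁻¹ * ∑' i : S, (a i * b i) ^ α) := by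
        gcongr
        exact tsum_tsum_pow_toNat_sub_mul_le S (T ^ α) fun i => (a i * b i) ^ α
    _ = _ := by simp only [ENNReal.mul_rpow_of_nonneg _ _ hα.le, mul_assoc]

theorem tsum_rpow_mul_le_tsum_rpow_mul_tsum_Iic (hα : 0 ≤ α) :
    ∑' k : S, a k ^ α * b k ^ α ≤ ∑' k : S, a k ^ α * (∑' i : {i // i ∈ S ∧ i ≤ k}, b i) ^ α := by
  gcongr with k
  exact ENNReal.le_tsum (⟨k, k.2, le_rfl⟩ : {i // i ∈ S ∧ i ≤ k})

end StronglyDecreasing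

theorem stmt0_general (α d : ℝ) (hα : 0 < α) (hd1 : d < 1) :
    ∃ C : ℝ≥0∞, 0 < C ∧ C ≠ ⊤ ∧
      ∀ (S : Set ℤ) (a b : ℤ → ℝ≥0∞),
        (∀ ⦃j k l : ℤ⦄, j ∈ S → l ∈ S → j ≤ k → k ≤ l → k ∈ S) →
        (∀ k ∈ S, 0 < a k ∧ a k ≠ ⊤) →
        (∀ k ∈ S, 0 < b k) →
        (∀ k : ℤ, k ∈ S → (k + 1) ∈ S → a (k + 1) ≤ ENNReal.ofReal d * a k) →
        (∑' k : S, a k.1 ^ α * (∑' i : {i : ℤ // i ∈ S ∧ i ≤ k.1}, b i.1) ^ α)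
            ≤ C * ∑' k : S, a k.1 ^ α * b k.1 ^ α ∧
        (∑' k : S, a k.1 ^ α * b k.1 ^ α)
            ≤ C * ∑' k : S, a k.1 ^ α * (∑' i : {i : ℤ // i ∈ S ∧ i ≤ k.1}, b i.1) ^ α := by
  set T : ℝ≥0∞ := ENNReal.ofReal d ^ (1 / 2 : ℝ)
  have hT : T < 1 := ENNReal.rpow_lt_one (ENNReal.ofReal_lt_one.2 hd1) (by norm_num)
  have hTα : T ^ α < 1 := ENNReal.rpow_lt_one hT hα
  have hT2 : T ^ 2 = ENNReal.ofReal d := by rw [← ENNReal.rpow_mul_natCast]; norm_num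
  have hC : 1 ≤ (1 - T)⁻¹ ^ α * (1 - T ^ α)⁻¹ :=
    one_le_mul (ENNReal.one_le_rpow (ENNReal.one_le_inv.2 tsub_le_self) hα)
      (ENNReal.one_le_inv.2 tsub_le_self)
  refine ⟨_, zero_lt_one.trans_le hC, ?_, fun S a b hS _ _ hab => ?_⟩
  · exact ENNReal.mul_ne_top
      (ENNReal.rpow_ne_top_of_nonneg hα.le (ENNReal.inv_ne_top.2 (tsub_pos_of_lt hT).ne'))
      (ENNReal.inv_ne_top.2 (tsub_pos_of_lt hTα).ne')
  have hS' : S.OrdConnected := ⟨fun j hj l hl k hk => hS hj hl hk.1 hk.2⟩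
  rw [← hT2] at hab
  exact ⟨tsum_rpow_mul_tsum_Iic_le hα hS' hab,
    (tsum_rpow_mul_le_tsum_rpow_mul_tsum_Iic hα.le).trans (le_mul_of_one_le_left zero_le hC)⟩

/-- Strongly decreasing sequences: `∑ aₖ^α (∑_{i≤k} bᵢ)^α ≈ ∑ aₖ^α bₖ^α`,
with constants depending only on `α` and the strong-decrease constant `d`. -/
theorem stmt0 (α d : ℝ) (hα : 0 < α) (hd0 : 0 ≤ d) (hd1 : d < 1) :
    ∃ C : ℝ≥0∞, 0 < C ∧ C ≠ ⊤ ∧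
      ∀ (S : Set ℤ) (a b : ℤ → ℝ≥0∞),
        (∀ ⦃j k l : ℤ⦄, j ∈ S → l ∈ S → j ≤ k → k ≤ l → k ∈ S) →
        (∀ k ∈ S, 0 < a k ∧ a k ≠ ⊤) →
        (∀ k ∈ S, 0 < b k) →
        (∀ k : ℤ, k ∈ S → (k + 1) ∈ S → a (k + 1) ≤ ENNReal.ofReal d * a k) →
        (∑' k : S, a k.1 ^ α * (∑' i : {i : ℤ // i ∈ S ∧ i ≤ k.1}, b i.1) ^ α)
            ≤ C * ∑' k : S, a k.1 ^ α * b k.1 ^ α ∧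
        (∑' k : S, a k.1 ^ α * b k.1 ^ α)
            ≤ C * ∑' k : S, a k.1 ^ α * (∑' i : {i : ℤ // i ∈ S ∧ i ≤ k.1}, b i.1) ^ α :=
  stmt0_general α d hα hd1
end

section
/- Let α > 0 and let {a_k} and {b_k} be sequences of positive real numbers indexed by integers N ≤ k ≤ M. If {a_k} is strongly increasing, i.e. inf{a_{k+1}/a_k : N < k < M} > 1, then ∑_{k=N}^{M} a_k^α (∑_{i=k}^{M} b_i)^α is comparable (up to constants depending only on α and the strong-increase constant) to ∑_{k=N}^{M} a_k^α b_k^α. -/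
/-!
Fix `1 < r < d`. Writing `bᵢ = r^{-(i-k)} · r^{i-k} bᵢ`, the tail `∑_{i ≥ k} bᵢ` is at most
`(1 - r⁻¹)⁻¹ · sup_n rⁿ b_{k+n}`, and the `α`-th power of that supremum is at most
`∑_n r^{nα} b_{k+n}^α`. Strong increase gives `aₖ ≤ d⁻ⁿ a_{k+n}`, so after exchanging the sums over
`k` and `n` each term `a_j^α b_j^α` carries the weight `∑_n (r/d)^{nα} < ∞`.
The reverse comparison holds termwise, since `bₖ` is one term of its tail.
-/

open scoped ENNReal
open Set

theorem Set.OrdConnected.pow_mul_le_of_mul_le_succ {M : Type*} [CommMonoid M] [Preorder M]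
    [MulLeftMono M] {S : Set ℤ} (hS : S.OrdConnected) {f : ℤ → M} {q : M}
    (hf : ∀ k ∈ S, k + 1 ∈ S → q * f k ≤ f (k + 1)) {k : ℤ} (hk : k ∈ S) :
    ∀ n : ℕ, k + n ∈ S → q ^ n * f k ≤ f (k + n)
  | 0, _ => by simp
  | n + 1, hn => by
    push_cast at hn ⊢
    rw [← add_assoc] at hn ⊢
    have hn' : k + n ∈ S := hS.out hk hn ⟨by omega, by omega⟩
    calc q ^ (n + 1) * f k = q * (q ^ n * f k) := by rw [pow_succ', mul_assoc]
      _ ≤ q * f (k + n) := mul_le_mul_right (hS.pow_mul_le_of_mul_le_succ hf hk n hn') q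
      _ ≤ f (k + n + 1) := hf _ hn' hn

namespace ENNReal

theorem tsum_le_inv_one_sub_inv_mul_iSup {r : ℝ≥0∞} (hr0 : r ≠ 0) (hr : r ≠ ∞) (b : ℕ → ℝ≥0∞) :
    ∑' n, b n ≤ (1 - r⁻¹)⁻¹ * ⨆ n, r ^ n * b n :=
  calc ∑' n, b n = ∑' n, r⁻¹ ^ n * (r ^ n * b n) := by
        refine tsum_congr fun n => ?_
        rw [← mul_assoc, ← mul_pow, ENNReal.inv_mul_cancel hr0 hr, one_pow, one_mul]
    _ ≤ ∑' n, r⁻¹ ^ n * ⨆ m, r ^ m * b m := by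
        gcongr with n
        exact le_iSup (fun m => r ^ m * b m) n
    _ = (1 - r⁻¹)⁻¹ * ⨆ n, r ^ n * b n := by rw [ENNReal.tsum_mul_right, ENNReal.tsum_geometric]

theorem rpow_tsum_le_mul_tsum_geometric {α : ℝ} (hα : 0 < α) {r : ℝ≥0∞} (hr0 : r ≠ 0)
    (hr : r ≠ ∞) (b : ℕ → ℝ≥0∞) :
    (∑' n, b n) ^ α ≤ (1 - r⁻¹)⁻¹ ^ α * ∑' n, (r ^ α) ^ n * b n ^ α :=
  calc (∑' n, b n) ^ α ≤ ((1 - r⁻¹)⁻¹ * ⨆ n, r ^ n * b n) ^ α := by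
        gcongr
        exact tsum_le_inv_one_sub_inv_mul_iSup hr0 hr b
    _ = (1 - r⁻¹)⁻¹ ^ α * ⨆ n, (r ^ n * b n) ^ α := by
        rw [mul_rpow_of_nonneg _ _ hα.le]
        congr 1
        exact (orderIsoRpow α hα).map_iSup _
    _ ≤ (1 - r⁻¹)⁻¹ ^ α * ∑' n, (r ^ α) ^ n * b n ^ α := by
        gcongr
        refine iSup_le fun n => le_of_eq_of_le ?_ (ENNReal.le_tsum n)
        rw [mul_rpow_of_nonneg _ _ hα.le, ← rpow_natCast_mul, mul_comm (n : ℝ), rpow_mul_natCast]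

theorem tsum_indicator_add_le {G : Type*} [AddGroup G] (s : Set G) (f : G → ℝ≥0∞) (c : G) :
    ∑' k : s, s.indicator f (k + c) ≤ ∑' k : s, f k := by
  rw [tsum_subtype s f, ← (Equiv.addRight c).tsum_eq]
  exact ENNReal.tsum_comp_le_tsum_of_injective Subtype.val_injective
    (fun k => s.indicator f (Equiv.addRight c k))

theorem tsum_tail_eq_tsum_indicator_add (S : Set ℤ) (b : ℤ → ℝ≥0∞) (k : ℤ) :
    ∑' i : {i : ℤ // i ∈ S ∧ k ≤ i}, b i = ∑' n : ℕ, S.indicator b (k + n) := by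
  have hrestrict : ∀ n : ℕ,
      S.indicator b (k + n) = {i | i ∈ S ∧ k ≤ i}.indicator b (k + n) := by
    intro n
    by_cases h : k + n ∈ S
    · have h' : k + n ∈ {i | i ∈ S ∧ k ≤ i} := ⟨h, by omega⟩
      rw [indicator_of_mem h, indicator_of_mem h']
    · rw [indicator_of_notMem h, indicator_of_notMem fun h' => h h'.1]
  rw [show ∑' i : {i : ℤ // i ∈ S ∧ k ≤ i}, b i = ∑' i : {i | i ∈ S ∧ k ≤ i}, b i from rfl,
    tsum_subtype]
  simp_rw [hrestrict]
  refine (Function.Injective.tsum_eq (g := fun n : ℕ => k + n) (fun m n h => by simpa using h)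
    fun i hi => ?_).symm
  have hki : k ≤ i := (Set.support_indicator_subset hi).2
  exact ⟨(i - k).toNat, by dsimp only; omega⟩

theorem tsum_mul_tsum_geometric_indicator_add_le {S : Set ℤ} {A B : ℤ → ℝ≥0∞} {q R : ℝ≥0∞}
    (hq0 : q ≠ 0) (hq : q ≠ ∞) (hA : ∀ k ∈ S, ∀ n : ℕ, k + n ∈ S → q ^ n * A k ≤ A (k + n)) :
    ∑' k : S, A k * ∑' n : ℕ, R ^ n * S.indicator B (k + n)
      ≤ (1 - R / q)⁻¹ * ∑' k : S, A k * B k := by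
  have hterm : ∀ k ∈ S, ∀ n : ℕ,
      A k * (R ^ n * S.indicator B (k + n)) ≤ (R / q) ^ n * S.indicator (A * B) (k + n) := by
    intro k hk n
    by_cases hkn : k + n ∈ S
    · rw [indicator_of_mem hkn, indicator_of_mem hkn, Pi.mul_apply]
      calc A k * (R ^ n * B (k + n)) = (R / q) ^ n * (q ^ n * A k) * B (k + n) := by
            rw [← mul_assoc ((R / q) ^ n), ← mul_pow, ENNReal.div_mul_cancel hq0 hq]
            ring
        _ ≤ (R / q) ^ n * (A (k + n) * B (k + n)) := by
            rw [mul_assoc]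
            gcongr
            exact hA k hk n hkn
    · simp [indicator_of_notMem hkn]
  calc ∑' k : S, A k * ∑' n : ℕ, R ^ n * S.indicator B (k + n)
      = ∑' k : S, ∑' n : ℕ, A k * (R ^ n * S.indicator B (k + n)) := by
        simp_rw [ENNReal.tsum_mul_left]
    _ ≤ ∑' k : S, ∑' n : ℕ, (R / q) ^ n * S.indicator (A * B) (k + n) :=
        ENNReal.tsum_le_tsum fun k => ENNReal.tsum_le_tsum fun n => hterm k k.2 n
    _ = ∑' n : ℕ, (R / q) ^ n * ∑' k : S, S.indicator (A * B) (k + n) := by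
        rw [ENNReal.tsum_comm]
        simp_rw [ENNReal.tsum_mul_left]
    _ ≤ ∑' n : ℕ, (R / q) ^ n * ∑' k : S, A k * B k :=
        ENNReal.tsum_le_tsum fun n => mul_le_mul_right (tsum_indicator_add_le S (A * B) n) _
    _ = (1 - R / q)⁻¹ * ∑' k : S, A k * B k := by
        rw [ENNReal.tsum_mul_right, ENNReal.tsum_geometric]

theorem tsum_mul_rpow_tsum_tail_le {α : ℝ} (hα : 0 < α) {S : Set ℤ} (hS : S.OrdConnected)
    {a b : ℤ → ℝ≥0∞} {q r : ℝ≥0∞} (hq0 : q ≠ 0) (hq : q ≠ ∞) (hr0 : r ≠ 0) (hr : r ≠ ∞)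
    (ha : ∀ k ∈ S, k + 1 ∈ S → q * a k ≤ a (k + 1)) :
    ∑' k : S, a k ^ α * (∑' i : {i : ℤ // i ∈ S ∧ k ≤ i}, b i) ^ α
      ≤ (1 - r⁻¹)⁻¹ ^ α * (1 - r ^ α / q ^ α)⁻¹ * ∑' k : S, a k ^ α * b k ^ α := by
  have hA : ∀ k ∈ S, ∀ n : ℕ, k + n ∈ S → (q ^ α) ^ n * a k ^ α ≤ a (k + n) ^ α := by
    intro k hk n hkn
    rw [← rpow_mul_natCast, mul_comm α, rpow_natCast_mul, ← mul_rpow_of_nonneg _ _ hα.le]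
    gcongr
    exact hS.pow_mul_le_of_mul_le_succ ha hk n hkn
  have hind : ∀ x, S.indicator b x ^ α = S.indicator (fun i => b i ^ α) x := fun x =>
    congrFun (indicator_comp_of_zero (g := fun y : ℝ≥0∞ => y ^ α) (zero_rpow_of_pos hα)).symm x
  calc ∑' k : S, a k ^ α * (∑' i : {i : ℤ // i ∈ S ∧ k ≤ i}, b i) ^ α
      ≤ ∑' k : S, a k ^ α * ((1 - r⁻¹)⁻¹ ^ α
          * ∑' n : ℕ, (r ^ α) ^ n * S.indicator (fun i => b i ^ α) (k + n)) := by
        gcongr with k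
        simp_rw [tsum_tail_eq_tsum_indicator_add, ← hind]
        exact rpow_tsum_le_mul_tsum_geometric hα hr0 hr _
    _ = (1 - r⁻¹)⁻¹ ^ α * ∑' k : S, a k ^ α
          * ∑' n : ℕ, (r ^ α) ^ n * S.indicator (fun i => b i ^ α) (k + n) := by
        simp_rw [mul_left_comm (a _ ^ α)]
        exact ENNReal.tsum_mul_left
    _ ≤ (1 - r⁻¹)⁻¹ ^ α * (1 - r ^ α / q ^ α)⁻¹ * ∑' k : S, a k ^ α * b k ^ α := by
        rw [mul_assoc]
        gcongr
        exact tsum_mul_tsum_geometric_indicator_add_le (rpow_pos (pos_iff_ne_zero.2 hq0) hq).ne'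
          (rpow_ne_top_of_nonneg hα.le hq) hA

theorem tsum_mul_rpow_le_tsum_mul_rpow_tsum_tail {α : ℝ} (hα : 0 ≤ α) (S : Set ℤ)
    (a b : ℤ → ℝ≥0∞) :
    ∑' k : S, a k ^ α * b k ^ α ≤ ∑' k : S, a k ^ α * (∑' i : {i : ℤ // i ∈ S ∧ k ≤ i}, b i) ^ α :=
  ENNReal.tsum_le_tsum fun k => by
    gcongr
    exact ENNReal.le_tsum (⟨k, k.2, le_rfl⟩ : {i : ℤ // i ∈ S ∧ k ≤ i})

end ENNReal

open ENNReal

/-- Strongly increasing sequences: `∑ aₖ^α (∑_{i≥k} bᵢ)^α ≈ ∑ aₖ^α bₖ^α`,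
with constants depending only on `α` and the strong-increase constant `d > 1`. -/
theorem stmt1 (α d : ℝ) (hα : 0 < α) (hd1 : 1 < d) :
    ∃ C : ℝ≥0∞, 0 < C ∧ C ≠ ⊤ ∧
      ∀ (S : Set ℤ) (a b : ℤ → ℝ≥0∞),
        (∀ ⦃j k l : ℤ⦄, j ∈ S → l ∈ S → j ≤ k → k ≤ l → k ∈ S) →
        (∀ k ∈ S, 0 < a k ∧ a k ≠ ⊤) →
        (∀ k ∈ S, 0 < b k) →
        (∀ k : ℤ, k ∈ S → (k + 1) ∈ S → ENNReal.ofReal d * a k ≤ a (k + 1)) →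
        (∑' k : S, a k.1 ^ α * (∑' i : {i : ℤ // i ∈ S ∧ k.1 ≤ i}, b i.1) ^ α)
            ≤ C * ∑' k : S, a k.1 ^ α * b k.1 ^ α ∧
        (∑' k : S, a k.1 ^ α * b k.1 ^ α)
            ≤ C * ∑' k : S, a k.1 ^ α * (∑' i : {i : ℤ // i ∈ S ∧ k.1 ≤ i}, b i.1) ^ α := by
  obtain ⟨r, hr1, hrd⟩ := exists_between (one_lt_ofReal.2 hd1)
  have hq0 : ENNReal.ofReal d ≠ 0 := (zero_lt_one.trans (hr1.trans hrd)).ne'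
  have hr0 : r ≠ 0 := (zero_lt_one.trans hr1).ne'
  have hr : r ≠ ∞ := hrd.ne_top
  set C₀ := (1 - r⁻¹)⁻¹ ^ α * (1 - r ^ α / ENNReal.ofReal d ^ α)⁻¹
  have hC₀ : C₀ ≠ ∞ := by
    refine mul_ne_top (rpow_ne_top_of_nonneg hα.le (inv_ne_top.2 ?_)) (inv_ne_top.2 ?_)
    · exact (tsub_pos_of_lt (ENNReal.inv_lt_one.2 hr1)).ne'
    · refine (tsub_pos_of_lt (div_lt_of_lt_mul ?_)).ne'
      rw [one_mul]
      exact rpow_lt_rpow hrd hα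
  refine ⟨C₀ + 1, zero_lt_one.trans_le le_add_self, add_ne_top.2 ⟨hC₀, one_ne_top⟩,
    fun S a b hS _ _ ha => ⟨?_, ?_⟩⟩
  · exact (tsum_mul_rpow_tsum_tail_le hα ⟨fun j hj l hl k hk => hS hj hl hk.1 hk.2⟩ hq0
      ofReal_ne_top hr0 hr ha).trans (mul_le_mul_left le_self_add _)
  · exact (tsum_mul_rpow_le_tsum_mul_rpow_tsum_tail hα.le S a b).trans
      (le_mul_of_one_le_left' le_add_self)
end

section
/- Let β > 0 and let {a_k}_{k=N}^{M} be a sequence of non-negative real numbers such that, in the case 0 < β < 1, one has 0 < ∑_{i=k}^{M} a_i < ∞ for every k. Then ∑_{k=N}^{M} a_k (∑_{j=k}^{M} a_j)^{β−1} is comparable, with constants depending only on β, to (∑_{k=N}^{M} a_k)^{β}. -/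
/-!
Write `T k = ∑_{j ≥ k} a_j`, so that `T k = a_k + T (k + 1)`. The tangent line of `t ↦ t ^ β` at
`T k` gives `β a_k T_k^{β-1} ≤ T_k^β - T_{k+1}^β` when `β ≤ 1` (concavity) and the reverse
inequality when `β ≥ 1` (convexity), and the differences `T_k^β - T_{k+1}^β` telescope to
`(∑ a)^β` because the tails tend to `0`. The other inequality is immediate in each case: `T_k ≤ ∑ a`
bounds `T_k^{β-1}` by `(∑ a)^{β-1}`, from below if `β ≤ 1` and from above if `β ≥ 1`.
A sum over `ℤ` is the supremum of its one-sided sums `∑_{k ∈ ℕ} a_{n+k}`, to which the argument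
applies.
-/

open scoped ENNReal
open Filter Topology

theorem Real.rpow_add_mul_rpow_sub_one_le_add_rpow {β c x : ℝ} (hβ₀ : 0 ≤ β) (hβ₁ : β ≤ 1)
    (hx : 0 ≤ x) (hcx : 0 < c + x) :
    x ^ β + β * (c * (c + x) ^ (β - 1)) ≤ (c + x) ^ β := by
  have hs : -1 ≤ -c / (c + x) := by
    rw [neg_div, neg_le_neg_iff, div_le_one hcx]; linarith
  have h := rpow_one_add_le_one_add_mul_self hs hβ₀ hβ₁
  have hbase : 1 + -c / (c + x) = x / (c + x) := by field_simp; ring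
  rw [hbase, Real.div_rpow hx hcx.le, div_le_iff₀ (Real.rpow_pos_of_pos hcx β)] at h
  rw [Real.rpow_sub_one hcx.ne']
  calc x ^ β + β * (c * ((c + x) ^ β / (c + x)))
      = x ^ β - β * (-c / (c + x)) * (c + x) ^ β := by ring
    _ ≤ (c + x) ^ β := by linarith

theorem Real.add_rpow_le_rpow_add_mul_rpow_sub_one {β c x : ℝ} (hβ : 1 ≤ β)
    (hx : 0 ≤ x) (hcx : 0 < c + x) :
    (c + x) ^ β ≤ x ^ β + β * (c * (c + x) ^ (β - 1)) := by
  have hs : -1 ≤ -c / (c + x) := by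
    rw [neg_div, neg_le_neg_iff, div_le_one hcx]; linarith
  have h := one_add_mul_self_le_rpow_one_add hs hβ
  have hbase : 1 + -c / (c + x) = x / (c + x) := by field_simp; ring
  rw [hbase, Real.div_rpow hx hcx.le, le_div_iff₀ (Real.rpow_pos_of_pos hcx β)] at h
  rw [Real.rpow_sub_one hcx.ne']
  calc (c + x) ^ β ≤ x ^ β - β * (-c / (c + x)) * (c + x) ^ β := by linarith
    _ = x ^ β + β * (c * ((c + x) ^ β / (c + x))) := by ring

namespace ENNReal

theorem rpow_le_rpow_of_nonpos {x y : ℝ≥0∞} {z : ℝ} (hxy : x ≤ y) (hz : z ≤ 0) :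
    y ^ z ≤ x ^ z := by
  rw [← neg_neg z, rpow_neg y, rpow_neg x]
  exact ENNReal.inv_le_inv.2 (rpow_le_rpow hxy (neg_nonneg.2 hz))

theorem self_mul_rpow_sub_one {x : ℝ≥0∞} {β : ℝ} (hx : x ≠ ⊤) (hβ : 0 < β) :
    x * x ^ (β - 1) = x ^ β := by
  rcases eq_or_ne x 0 with rfl | hx₀
  · simp [zero_rpow_of_pos hβ]
  · nth_rewrite 1 [← rpow_one x]
    rw [← rpow_add _ _ hx₀ hx, add_sub_cancel]

theorem self_mul_rpow_sub_one_of_one_le (x : ℝ≥0∞) {β : ℝ} (hβ : 1 ≤ β) :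
    x * x ^ (β - 1) = x ^ β := by
  nth_rewrite 1 [← rpow_one x]
  rw [← rpow_add_of_nonneg _ _ zero_le_one (sub_nonneg.2 hβ), add_sub_cancel]

theorem rpow_add_mul_rpow_sub_one_le_add_rpow {β : ℝ} (hβ₀ : 0 ≤ β) (hβ₁ : β ≤ 1)
    {c x : ℝ≥0∞} (hcx : c + x ≠ ⊤) :
    x ^ β + ENNReal.ofReal β * (c * (c + x) ^ (β - 1)) ≤ (c + x) ^ β := by
  rcases eq_or_ne (c + x) 0 with h₀ | h₀
  · obtain ⟨rfl, rfl⟩ := add_eq_zero.1 h₀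
    simp
  obtain ⟨hc, hx⟩ := ENNReal.add_ne_top.1 hcx
  lift c to NNReal using hc
  lift x to NNReal using hx
  have hy : c + x ≠ 0 := by exact_mod_cast h₀
  rw [← coe_add, ← coe_rpow_of_ne_zero hy, ← coe_rpow_of_ne_zero hy, ← coe_rpow_of_nonneg _ hβ₀,
    ENNReal.ofReal, ← coe_mul, ← coe_mul, ← coe_add, coe_le_coe, ← NNReal.coe_le_coe]
  push_cast [Real.coe_toNNReal _ hβ₀]
  exact Real.rpow_add_mul_rpow_sub_one_le_add_rpow hβ₀ hβ₁ x.2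
    (by exact_mod_cast pos_iff_ne_zero.2 hy)

theorem add_rpow_le_rpow_add_mul_rpow_sub_one {β : ℝ} (hβ : 1 ≤ β) (c x : ℝ≥0∞) :
    (c + x) ^ β ≤ x ^ β + ENNReal.ofReal β * (c * (c + x) ^ (β - 1)) := by
  have hβ₀ : 0 < β := zero_lt_one.trans_le hβ
  rcases eq_or_ne x ⊤ with rfl | hx
  · simp [top_rpow_of_pos hβ₀]
  rcases eq_or_ne c ⊤ with rfl | hc
  · have h1 : (1 : ℝ≥0∞) ≤ ⊤ ^ (β - 1) := by
      simpa using rpow_le_rpow (le_top : (1 : ℝ≥0∞) ≤ ⊤) (sub_nonneg.2 hβ)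
    simp [top_mul (one_pos.trans_le h1).ne', mul_top (ofReal_pos.2 hβ₀).ne']
  rcases eq_or_ne (c + x) 0 with h₀ | h₀
  · obtain ⟨rfl, rfl⟩ := add_eq_zero.1 h₀
    simp [zero_rpow_of_pos hβ₀]
  lift c to NNReal using hc
  lift x to NNReal using hx
  have hy : c + x ≠ 0 := by exact_mod_cast h₀
  rw [← coe_add, ← coe_rpow_of_ne_zero hy, ← coe_rpow_of_ne_zero hy, ← coe_rpow_of_nonneg _ hβ₀.le,
    ENNReal.ofReal, ← coe_mul, ← coe_mul, ← coe_add, coe_le_coe, ← NNReal.coe_le_coe]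
  push_cast [Real.coe_toNNReal _ hβ₀.le]
  exact Real.add_rpow_le_rpow_add_mul_rpow_sub_one hβ x.2 (by exact_mod_cast pos_iff_ne_zero.2 hy)

end ENNReal

theorem add_sum_range_le_of_add_le {α : Type*} [AddCommMonoid α] [PartialOrder α]
    [IsOrderedAddMonoid α] {u v : ℕ → α} (h : ∀ j, u (j + 1) + v j ≤ u j) (m : ℕ) :
    u m + ∑ j ∈ Finset.range m, v j ≤ u 0 := by
  have hanti : Antitone fun m => u m + ∑ j ∈ Finset.range m, v j :=
    antitone_nat_of_succ_le fun m => by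
      rw [Finset.sum_range_succ, add_comm _ (v m), ← add_assoc]
      exact add_le_add_left (h m) _
  simpa using hanti (Nat.zero_le m)

theorem le_add_sum_range_of_le_add {α : Type*} [AddCommMonoid α] [PartialOrder α]
    [IsOrderedAddMonoid α] {u v : ℕ → α} (h : ∀ j, u j ≤ u (j + 1) + v j) (m : ℕ) :
    u 0 ≤ u m + ∑ j ∈ Finset.range m, v j := by
  have hmono : Monotone fun m => u m + ∑ j ∈ Finset.range m, v j :=
    monotone_nat_of_le_succ fun m => by
      rw [Finset.sum_range_succ, add_comm _ (v m), ← add_assoc]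
      exact add_le_add_left (h m) _
  simpa using hmono (Nat.zero_le m)

noncomputable def tailSum (f : ℕ → ℝ≥0∞) (j : ℕ) : ℝ≥0∞ := ∑' k, f (k + j)

section TailSum

variable (f : ℕ → ℝ≥0∞)

@[simp] theorem tailSum_zero : tailSum f 0 = ∑' k, f k := by simp [tailSum]

theorem tailSum_eq_add_tailSum_succ (j : ℕ) : tailSum f j = f j + tailSum f (j + 1) := by
  rw [tailSum, tsum_eq_zero_add' ENNReal.summable, zero_add, tailSum]
  simp only [add_right_comm _ 1 j, add_assoc]

theorem antitone_tailSum : Antitone (tailSum f) :=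
  antitone_nat_of_succ_le fun j => (tailSum_eq_add_tailSum_succ f j).symm ▸ le_add_self

theorem tailSum_le_tsum (j : ℕ) : tailSum f j ≤ ∑' k, f k :=
  tailSum_zero f ▸ antitone_tailSum f (Nat.zero_le j)

theorem sum_range_add_tailSum (j : ℕ) : ∑ k ∈ Finset.range j, f k + tailSum f j = ∑' k, f k :=
  ENNReal.summable.sum_add_tsum_nat_add'

theorem tendsto_tailSum_atTop_zero (hf : ∑' k, f k ≠ ⊤) : Tendsto (tailSum f) atTop (𝓝 0) :=
  ENNReal.tendsto_sum_nat_add f hf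

end TailSum

theorem tsum_ne_top_of_tailSum_ne_top {f : ℕ → ℝ≥0∞} (h : ∀ j, f j ≠ 0 → tailSum f j ≠ ⊤) :
    ∑' k, f k ≠ ⊤ := by
  classical
  by_cases hf : ∃ j, f j ≠ 0
  · have hhead : ∑ k ∈ Finset.range (Nat.find hf), f k = 0 :=
      Finset.sum_eq_zero fun k hk => not_not.1 (Nat.find_min hf (Finset.mem_range.1 hk))
    rw [← sum_range_add_tailSum f (Nat.find hf), hhead, zero_add]
    exact h _ (Nat.find_spec hf)
  · push Not at hf
    simp [hf]

section PowerRule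

variable {f : ℕ → ℝ≥0∞} {β : ℝ}

theorem ofReal_mul_tsum_mul_tailSum_rpow_le (hβ₀ : 0 ≤ β) (hβ₁ : β ≤ 1) (hf : ∑' k, f k ≠ ⊤) :
    ENNReal.ofReal β * ∑' j, f j * tailSum f j ^ (β - 1) ≤ (∑' k, f k) ^ β := by
  have hstep : ∀ j, tailSum f (j + 1) ^ β + ENNReal.ofReal β * (f j * tailSum f j ^ (β - 1))
      ≤ tailSum f j ^ β := fun j => by
    rw [tailSum_eq_add_tailSum_succ f j]
    refine ENNReal.rpow_add_mul_rpow_sub_one_le_add_rpow hβ₀ hβ₁ ?_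
    rw [← tailSum_eq_add_tailSum_succ]
    exact ne_top_of_le_ne_top hf (tailSum_le_tsum f j)
  rw [← ENNReal.tsum_mul_left, ← tailSum_zero f]
  refine ENNReal.tsum_le_of_sum_range_le fun m => ?_
  exact le_add_self.trans (add_sum_range_le_of_add_le (u := fun j => tailSum f j ^ β) hstep m)

theorem rpow_tsum_le_tsum_mul_tailSum_rpow (hβ₀ : 0 < β) (hβ₁ : β ≤ 1) (hf : ∑' k, f k ≠ ⊤) :
    (∑' k, f k) ^ β ≤ ∑' j, f j * tailSum f j ^ (β - 1) := by
  calc (∑' k, f k) ^ β = ∑' j, f j * (∑' k, f k) ^ (β - 1) := by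
        rw [ENNReal.tsum_mul_right, ENNReal.self_mul_rpow_sub_one hf hβ₀]
    _ ≤ ∑' j, f j * tailSum f j ^ (β - 1) := ENNReal.tsum_le_tsum fun j =>
        mul_le_mul_right (ENNReal.rpow_le_rpow_of_nonpos (tailSum_le_tsum f j) (by linarith)) _

theorem tsum_mul_tailSum_rpow_le_rpow_tsum (hβ : 1 ≤ β) :
    ∑' j, f j * tailSum f j ^ (β - 1) ≤ (∑' k, f k) ^ β := by
  calc ∑' j, f j * tailSum f j ^ (β - 1) ≤ ∑' j, f j * (∑' k, f k) ^ (β - 1) :=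
        ENNReal.tsum_le_tsum fun j =>
          mul_le_mul_right (ENNReal.rpow_le_rpow (tailSum_le_tsum f j) (by linarith)) _
    _ = (∑' k, f k) ^ β := by
        rw [ENNReal.tsum_mul_right, ENNReal.self_mul_rpow_sub_one_of_one_le _ hβ]

theorem rpow_tsum_le_ofReal_mul_tsum_mul_tailSum_rpow (hβ : 1 ≤ β) (hf : ∀ j, f j ≠ ⊤) :
    (∑' k, f k) ^ β ≤ ENNReal.ofReal β * ∑' j, f j * tailSum f j ^ (β - 1) := by
  have hβ₀ : 0 < β := zero_lt_one.trans_le hβ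
  by_cases htop : ∑' k, f k = ⊤
  · have htail : ∀ j, tailSum f j = ⊤ := fun j => by
      have h := sum_range_add_tailSum f j
      rw [htop, ENNReal.add_eq_top] at h
      exact h.resolve_left (ENNReal.sum_ne_top.2 fun k _ => hf k)
    have h1 : (1 : ℝ≥0∞) ≤ ⊤ ^ (β - 1) := by
      simpa using ENNReal.rpow_le_rpow (le_top : (1 : ℝ≥0∞) ≤ ⊤) (sub_nonneg.2 hβ)
    have hsum : ∑' j, f j * tailSum f j ^ (β - 1) = ⊤ := top_le_iff.1 <| htop ▸
      ENNReal.tsum_le_tsum fun j => by simpa [htail j] using mul_le_mul_right h1 (f j)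
    rw [hsum, ENNReal.mul_top (ENNReal.ofReal_pos.2 hβ₀).ne']
    exact le_top
  have hstep : ∀ j, tailSum f j ^ β
      ≤ tailSum f (j + 1) ^ β + ENNReal.ofReal β * (f j * tailSum f j ^ (β - 1)) := fun j => by
    rw [tailSum_eq_add_tailSum_succ f j]
    exact ENNReal.add_rpow_le_rpow_add_mul_rpow_sub_one hβ _ _
  have hlim : Tendsto (fun m => tailSum f m ^ β
      + ENNReal.ofReal β * ∑' j, f j * tailSum f j ^ (β - 1)) atTop
      (𝓝 (ENNReal.ofReal β * ∑' j, f j * tailSum f j ^ (β - 1))) := by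
    have h := ((ENNReal.continuous_rpow_const (y := β)).tendsto 0).comp
      (tendsto_tailSum_atTop_zero f htop)
    simpa [ENNReal.zero_rpow_of_pos hβ₀] using h.add_const _
  refine ge_of_tendsto' hlim fun m => ?_
  rw [← tailSum_zero f, ← ENNReal.tsum_mul_left]
  exact (le_add_sum_range_of_le_add hstep m).trans (add_le_add_right (ENNReal.sum_le_tsum _) _)

end PowerRule

theorem tsum_nat_add_eq_tsum_indicator_Ici {α : Type*} [AddCommMonoid α] [TopologicalSpace α]
    (f : ℤ → α) (m : ℤ) : ∑' k : ℕ, f (m + k) = ∑' i, (Set.Ici m).indicator f i := by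
  have hinj : Function.Injective fun k : ℕ => m + k := fun k l h => by simpa using h
  rw [← hinj.tsum_eq fun i hi => ?_]
  · exact tsum_congr fun k => (Set.indicator_of_mem (by simp) f).symm
  · have hmi : m ≤ i := Set.mem_Ici.1 (Set.mem_of_indicator_ne_zero hi)
    exact ⟨(i - m).toNat, by simp only; omega⟩

theorem ENNReal.tsum_int_eq_iSup_tsum_nat_add (f : ℤ → ℝ≥0∞) :
    ∑' i, f i = ⨆ m : ℤ, ∑' k : ℕ, f (m + k) := by
  refine le_antisymm ?_ (iSup_le fun m => ?_)
  · rw [ENNReal.tsum_eq_iSup_sum]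
    refine iSup_le fun F => ?_
    obtain ⟨m, hm⟩ := F.bddBelow
    calc ∑ i ∈ F, f i = ∑ i ∈ F, (Set.Ici m).indicator f i :=
          Finset.sum_congr rfl fun i hi => (Set.indicator_of_mem (s := Set.Ici m) (hm hi) f).symm
      _ ≤ ∑' i, (Set.Ici m).indicator f i := ENNReal.sum_le_tsum F
      _ = ∑' k : ℕ, f (m + k) := (tsum_nat_add_eq_tsum_indicator_Ici f m).symm
      _ ≤ ⨆ m : ℤ, ∑' k : ℕ, f (m + k) := le_iSup (fun m : ℤ => ∑' k : ℕ, f (m + k)) m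
  · rw [tsum_nat_add_eq_tsum_indicator_Ici]
    exact ENNReal.tsum_le_tsum fun i => Set.indicator_le_self _ f i

section IntTails

variable (b : ℤ → ℝ≥0∞) {β : ℝ}

theorem tailSum_comp_add (n : ℤ) (j : ℕ) :
    tailSum (fun k : ℕ => b (n + k)) j = ∑' k : ℕ, b (n + j + k) :=
  tsum_congr fun k => congrArg b (by push_cast; ring)

theorem tsum_mul_tail_rpow_eq_iSup :
    ∑' m, b m * (∑' k : ℕ, b (m + k)) ^ (β - 1)
      = ⨆ n : ℤ, ∑' j : ℕ, b (n + j) * tailSum (fun k : ℕ => b (n + k)) j ^ (β - 1) := by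
  simp only [ENNReal.tsum_int_eq_iSup_tsum_nat_add (fun m => b m * _), tailSum_comp_add]

theorem rpow_tsum_eq_iSup (hβ : 0 < β) :
    (∑' m, b m) ^ β = ⨆ n : ℤ, (∑' k : ℕ, b (n + k)) ^ β := by
  rw [ENNReal.tsum_int_eq_iSup_tsum_nat_add]
  exact (ENNReal.orderIsoRpow β hβ).map_iSup _

theorem power_rule_of_le_one (hβ₀ : 0 < β) (hβ₁ : β ≤ 1)
    (hb : ∀ m, ∑' k : ℕ, b (m + k) ≠ ⊤) :
    ∑' m, b m * (∑' k : ℕ, b (m + k)) ^ (β - 1) ≤ ENNReal.ofReal β⁻¹ * (∑' m, b m) ^ β ∧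
      (∑' m, b m) ^ β ≤ ∑' m, b m * (∑' k : ℕ, b (m + k)) ^ (β - 1) := by
  rw [tsum_mul_tail_rpow_eq_iSup, rpow_tsum_eq_iSup _ hβ₀, ENNReal.mul_iSup]
  refine ⟨iSup_mono fun n => ?_,
    iSup_mono fun n => rpow_tsum_le_tsum_mul_tailSum_rpow hβ₀ hβ₁ (hb n)⟩
  rw [ENNReal.ofReal_inv_of_pos hβ₀,
    ← ENNReal.mul_le_iff_le_inv (ENNReal.ofReal_pos.2 hβ₀).ne' ENNReal.ofReal_ne_top]
  exact ofReal_mul_tsum_mul_tailSum_rpow_le hβ₀.le hβ₁ (hb n)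

theorem power_rule_of_one_le (hβ : 1 ≤ β) (hb : ∀ m, b m ≠ ⊤) :
    ∑' m, b m * (∑' k : ℕ, b (m + k)) ^ (β - 1) ≤ (∑' m, b m) ^ β ∧
      (∑' m, b m) ^ β ≤ ENNReal.ofReal β * ∑' m, b m * (∑' k : ℕ, b (m + k)) ^ (β - 1) := by
  rw [tsum_mul_tail_rpow_eq_iSup, rpow_tsum_eq_iSup _ (zero_lt_one.trans_le hβ),
    ENNReal.mul_iSup]
  exact ⟨iSup_mono fun n => tsum_mul_tailSum_rpow_le_rpow_tsum hβ,
    iSup_mono fun n => rpow_tsum_le_ofReal_mul_tsum_mul_tailSum_rpow hβ fun j => hb _⟩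

end IntTails

section SetTails

variable (S : Set ℤ) (a : ℤ → ℝ≥0∞) {β : ℝ}

theorem tsum_subtype_mem_le_eq (m : ℤ) :
    ∑' i : {i : ℤ // i ∈ S ∧ m ≤ i}, a i = ∑' k : ℕ, S.indicator a (m + k) := by
  have hset : {i : ℤ | i ∈ S ∧ m ≤ i} = Set.Ici m ∩ S := by ext; simp [and_comm]
  rw [tsum_nat_add_eq_tsum_indicator_Ici, Set.indicator_indicator, ← hset]
  exact tsum_subtype {i : ℤ | i ∈ S ∧ m ≤ i} a

theorem tsum_subtype_mul_tail_rpow_eq :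
    ∑' k : S, a k * (∑' i : {i : ℤ // i ∈ S ∧ k.1 ≤ i}, a i) ^ (β - 1)
      = ∑' m, S.indicator a m * (∑' k : ℕ, S.indicator a (m + k)) ^ (β - 1) := by
  simp only [tsum_subtype_mem_le_eq]
  rw [tsum_subtype S fun m => a m * (∑' k : ℕ, S.indicator a (m + k)) ^ (β - 1)]
  simp only [Set.indicator_mul_left]

variable {S a}

theorem tsum_nat_add_indicator_ne_top (h : ∀ k ∈ S, ∑' i : {i : ℤ // i ∈ S ∧ k ≤ i}, a i ≠ ⊤)
    (m : ℤ) : ∑' k : ℕ, S.indicator a (m + k) ≠ ⊤ :=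
  tsum_ne_top_of_tailSum_ne_top fun j hj => by
    rw [tailSum_comp_add, ← tsum_subtype_mem_le_eq]
    exact h _ (Set.mem_of_indicator_ne_zero hj)

end SetTails

/-- Power rule for tails: for `β > 0`,
`∑_k aₖ (∑_{j≥k} aⱼ)^{β−1} ≈ (∑_k aₖ)^β`, with constants depending only on `β`;
when `0 < β < 1` one assumes all the tails are positive and finite. -/
theorem stmt3 (β : ℝ) (hβ : 0 < β) :
    ∃ C : ℝ≥0∞, 0 < C ∧ C ≠ ⊤ ∧
      ∀ (S : Set ℤ) (a : ℤ → ℝ≥0∞),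
        (∀ ⦃j k l : ℤ⦄, j ∈ S → l ∈ S → j ≤ k → k ≤ l → k ∈ S) →
        (∀ k ∈ S, a k ≠ ⊤) →
        (β < 1 → ∀ k ∈ S,
          0 < (∑' i : {i : ℤ // i ∈ S ∧ k ≤ i}, a i.1) ∧
          (∑' i : {i : ℤ // i ∈ S ∧ k ≤ i}, a i.1) ≠ ⊤) →
        (∑' k : S, a k.1 * (∑' i : {i : ℤ // i ∈ S ∧ k.1 ≤ i}, a i.1) ^ (β - 1))
            ≤ C * (∑' k : S, a k.1) ^ β ∧
        (∑' k : S, a k.1) ^ β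
            ≤ C * ∑' k : S, a k.1 * (∑' i : {i : ℤ // i ∈ S ∧ k.1 ≤ i}, a i.1) ^ (β - 1) := by
  rcases lt_or_ge β 1 with hβ₁ | hβ₁
  · have hC : 1 ≤ ENNReal.ofReal β⁻¹ := ENNReal.one_le_ofReal.2 ((one_le_inv₀ hβ).2 hβ₁.le)
    refine ⟨_, zero_lt_one.trans_le hC, ENNReal.ofReal_ne_top, fun S a _ _ hfin => ?_⟩
    rw [tsum_subtype_mul_tail_rpow_eq, tsum_subtype]
    obtain ⟨hupper, hlower⟩ := power_rule_of_le_one (S.indicator a) hβ hβ₁.le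
      (tsum_nat_add_indicator_ne_top fun k hk => (hfin hβ₁ k hk).2)
    exact ⟨hupper, hlower.trans (le_mul_of_one_le_left' hC)⟩
  · have hC : 1 ≤ ENNReal.ofReal β := ENNReal.one_le_ofReal.2 hβ₁
    refine ⟨_, zero_lt_one.trans_le hC, ENNReal.ofReal_ne_top, fun S a _ ha _ => ?_⟩
    rw [tsum_subtype_mul_tail_rpow_eq, tsum_subtype]
    have hfin : ∀ m, S.indicator a m ≠ ⊤ := fun m => by
      by_cases hm : m ∈ S
      · simpa [hm] using ha m hm
      · simp [hm]
    obtain ⟨hupper, hlower⟩ := power_rule_of_one_le (S.indicator a) hβ₁ hfin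
    exact ⟨hupper.trans (le_mul_of_one_le_left' hC), hlower⟩
end

section
/- Discrete Hardy inequality, case p ≤ 1, p ≤ q: let 0 < p ≤ 1, p ≤ q < ∞, and let {a_k}, {b_k} be non-negative sequences indexed by N ≤ k ≤ M. The inequality (∑_{k=N}^{M} (∑_{i=N}^{k} x_i b_i)^q a_k)^{1/q} ≤ C (∑_{k=N}^{M} x_k^p)^{1/p} holds for every non-negative sequence {x_k} if and only if H₁ := sup_{N ≤ k ≤ M} (∑_{i=k}^{M} a_i)^{1/q} b_k < ∞; moreover the best constant C is comparable to H₁ with constants depending only on p, q. -/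
/-!
Since `p ≤ 1`, `(∑ xᵢ bᵢ)^p ≤ ∑ xᵢ^p bᵢ^p`, which reduces the inequality to the case `p = 1`
with exponent `s = q / p ≥ 1` and data `uᵢ = xᵢ^p`, `βᵢ = bᵢ^p`. In that case Hölder's inequality
with weights `uᵢ` gives `(∑_{i ≤ k} uᵢ βᵢ)^s ≤ U^(s-1) ∑_{i ≤ k} uᵢ βᵢ^s` with `U = ∑ uᵢ`.
Multiplying by `a_k`, summing over `k` and exchanging the order of summation leaves
`U^(s-1) ∑ᵢ uᵢ βᵢ^s Aᵢ` with `Aᵢ = ∑_{k ≥ i} a_k`, and `βᵢ^s Aᵢ ≤ (H₁^p)^s`.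
Conversely, a unit mass at `k` shows `A_k^(1/q) b_k ≤ C'`. Both constants are `1`.
-/

open scoped ENNReal
open Set

namespace ENNReal

variable {ι : Type*}

theorem rpow_tsum_le_of_forall_finset {r : ℝ} (hr : 0 < r) {f : ι → ℝ≥0∞} {B : ℝ≥0∞}
    (h : ∀ s : Finset ι, (∑ i ∈ s, f i) ^ r ≤ B) : (∑' i, f i) ^ r ≤ B := by
  rw [← le_rpow_inv_iff hr, ENNReal.tsum_eq_iSup_sum]
  exact iSup_le fun s => (le_rpow_inv_iff hr).2 (h s)

theorem rpow_tsum_le_tsum_rpow {p : ℝ} (hp0 : 0 < p) (hp1 : p ≤ 1) (f : ι → ℝ≥0∞) :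
    (∑' i, f i) ^ p ≤ ∑' i, f i ^ p := by
  refine rpow_tsum_le_of_forall_finset hp0 fun s => le_trans ?_ (ENNReal.sum_le_tsum s)
  induction s using Finset.cons_induction with
  | empty => simp [zero_rpow_of_pos hp0]
  | cons i s _ ih =>
    rw [Finset.sum_cons, Finset.sum_cons]
    exact (rpow_add_le_add_rpow _ _ hp0.le hp1).trans (add_le_add_right ih _)

theorem rpow_tsum_mul_le {r : ℝ} (hr : 1 ≤ r) (w f : ι → ℝ≥0∞) :
    (∑' i, w i * f i) ^ r ≤ (∑' i, w i) ^ (r - 1) * ∑' i, w i * f i ^ r := by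
  have hr0 : 0 < r := zero_lt_one.trans_le hr
  refine rpow_tsum_le_of_forall_finset hr0 fun s => ?_
  calc (∑ i ∈ s, w i * f i) ^ r
      ≤ ((∑ i ∈ s, w i) ^ (1 - r⁻¹) * (∑ i ∈ s, w i * f i ^ r) ^ r⁻¹) ^ r :=
        rpow_le_rpow (inner_le_weight_mul_Lp_of_nonneg s hr w f) hr0.le
    _ = (∑ i ∈ s, w i) ^ (r - 1) * ∑ i ∈ s, w i * f i ^ r := by
        rw [mul_rpow_of_nonneg _ _ hr0.le, ← rpow_mul, ← rpow_mul, sub_mul, one_mul,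
          inv_mul_cancel₀ hr0.ne', rpow_one]
    _ ≤ (∑' i, w i) ^ (r - 1) * ∑' i, w i * f i ^ r :=
        mul_le_mul' (rpow_le_rpow (ENNReal.sum_le_tsum s) (by linarith)) (ENNReal.sum_le_tsum s)

theorem tsum_tsum_Iic_eq_tsum_tsum_Ici [Preorder ι] (g : ι → ι → ℝ≥0∞) :
    ∑' k, ∑' i : Iic k, g k i = ∑' i, ∑' k : Ici i, g k i := by
  calc ∑' k, ∑' i : Iic k, g k i = ∑' k, ∑' i, (Iic k).indicator (g k) i :=
        tsum_congr fun k => tsum_subtype _ _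
    _ = ∑' i, ∑' k, (Ici i).indicator (fun k => g k i) k := ENNReal.tsum_comm
    _ = ∑' i, ∑' k : Ici i, g k i := tsum_congr fun i => (tsum_subtype _ _).symm

end ENNReal

theorem tsum_subtype_mem_and_le {α M : Type*} [Preorder α] [AddCommMonoid M] [TopologicalSpace M]
    (S : Set α) (k : S) (f : {i // i ∈ S ∧ i ≤ k.1} → M) :
    ∑' i, f i = ∑' i : Iic k, f ⟨i, i.1.2, i.2⟩ :=
  ((Equiv.subtypeSubtypeEquivSubtypeInter (· ∈ S) (· ≤ k.1)).tsum_eq f).symm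

theorem tsum_subtype_mem_and_ge {α M : Type*} [Preorder α] [AddCommMonoid M] [TopologicalSpace M]
    (S : Set α) (k : S) (f : {i // i ∈ S ∧ k.1 ≤ i} → M) :
    ∑' i, f i = ∑' i : Ici k, f ⟨i, i.1.2, i.2⟩ :=
  ((Equiv.subtypeSubtypeEquivSubtypeInter (· ∈ S) (k.1 ≤ ·)).tsum_eq f).symm

section Hardy

variable {ι : Type*} [Preorder ι]

theorem tsum_rpow_tsum_Iic_mul_le {q : ℝ} (hq : 1 ≤ q) (u b a : ι → ℝ≥0∞) :
    ∑' k, (∑' i : Iic k, u i * b i) ^ q * a k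
      ≤ (⨆ k, (∑' i : Ici k, a i) ^ (1 / q) * b k) ^ q * (∑' k, u k) ^ q := by
  set H := ⨆ k, (∑' i : Ici k, a i) ^ (1 / q) * b k
  set U := ∑' k, u k
  have hq0 : 0 < q := zero_lt_one.trans_le hq
  have hb : ∀ i, b i ^ q * ∑' k : Ici i, a k ≤ H ^ q := fun i =>
    calc b i ^ q * ∑' k : Ici i, a k = ((∑' k : Ici i, a k) ^ (1 / q) * b i) ^ q := by
          rw [ENNReal.mul_rpow_of_nonneg _ _ hq0.le, ← ENNReal.rpow_mul,
            one_div_mul_cancel hq0.ne', ENNReal.rpow_one, mul_comm]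
      _ ≤ H ^ q :=
          ENNReal.rpow_le_rpow (le_iSup (fun k => (∑' j : Ici k, a j) ^ (1 / q) * b k) i) hq0.le
  have hk : ∀ k : ι, (∑' i : Iic k, u i * b i) ^ q ≤ U ^ (q - 1) * ∑' i : Iic k, u i * b i ^ q :=
    fun k => (ENNReal.rpow_tsum_mul_le hq _ _).trans <| mul_le_mul_left (
      ENNReal.rpow_le_rpow (ENNReal.tsum_comp_le_tsum_of_injective Subtype.val_injective u)
        (by linarith)) _
  calc ∑' k, (∑' i : Iic k, u i * b i) ^ q * a k
      ≤ ∑' k, U ^ (q - 1) * ∑' i : Iic k, u i * b i ^ q * a k := by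
        refine ENNReal.tsum_le_tsum fun k => ?_
        rw [ENNReal.tsum_mul_right, ← mul_assoc]
        exact mul_le_mul_left (hk k) _
    _ = U ^ (q - 1) * ∑' i, u i * (b i ^ q * ∑' k : Ici i, a k) := by
        rw [ENNReal.tsum_mul_left,
          ENNReal.tsum_tsum_Iic_eq_tsum_tsum_Ici fun k i => u i * b i ^ q * a k]
        simp only [← ENNReal.tsum_mul_left, mul_assoc]
    _ ≤ U ^ (q - 1) * ∑' i, u i * H ^ q := by gcongr with i; exact hb i
    _ = H ^ q * (U ^ (q - 1) * U ^ (1 : ℝ)) := by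
        rw [ENNReal.tsum_mul_right, ENNReal.rpow_one]; ring
    _ = H ^ q * U ^ q := by
        rw [← ENNReal.rpow_add_of_nonneg _ _ (by linarith) zero_le_one, sub_add_cancel]

theorem rpow_tsum_rpow_tsum_Iic_mul_le {p q : ℝ} (hp0 : 0 < p) (hp1 : p ≤ 1) (hpq : p ≤ q)
    (x b a : ι → ℝ≥0∞) :
    (∑' k, (∑' i : Iic k, x i * b i) ^ q * a k) ^ (1 / q)
      ≤ (⨆ k, (∑' i : Ici k, a i) ^ (1 / q) * b k) * (∑' k, x k ^ p) ^ (1 / p) := by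
  set H := ⨆ k, (∑' i : Ici k, a i) ^ (1 / q) * b k
  set s := q / p
  have hq0 : 0 < q := hp0.trans_le hpq
  have hs : 1 ≤ s := (one_le_div hp0).2 hpq
  have hps : p * s = q := mul_div_cancel₀ q hp0.ne'
  have hx : ∀ k : ι, (∑' i : Iic k, x i * b i) ^ q ≤ (∑' i : Iic k, x i ^ p * b i ^ p) ^ s := by
    intro k
    rw [← hps, ENNReal.rpow_mul]
    gcongr
    simpa only [ENNReal.mul_rpow_of_nonneg _ _ hp0.le] using
      ENNReal.rpow_tsum_le_tsum_rpow hp0 hp1 fun i : Iic k => x i * b i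
  have hH : (⨆ k, (∑' i : Ici k, a i) ^ (1 / s) * b k ^ p) ≤ H ^ p := iSup_le fun k =>
    calc (∑' i : Ici k, a i) ^ (1 / s) * b k ^ p = ((∑' i : Ici k, a i) ^ (1 / q) * b k) ^ p := by
          rw [ENNReal.mul_rpow_of_nonneg _ _ hp0.le, ← ENNReal.rpow_mul]
          congr 2
          field_simp
          linarith
      _ ≤ H ^ p :=
          ENNReal.rpow_le_rpow (le_iSup (fun k => (∑' j : Ici k, a j) ^ (1 / q) * b k) k) hp0.le
  rw [one_div, ENNReal.rpow_inv_le_iff hq0]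
  calc ∑' k, (∑' i : Iic k, x i * b i) ^ q * a k
      ≤ ∑' k, (∑' i : Iic k, x i ^ p * b i ^ p) ^ s * a k :=
        ENNReal.tsum_le_tsum fun k => mul_le_mul_left (hx k) _
    _ ≤ (⨆ k, (∑' i : Ici k, a i) ^ (1 / s) * b k ^ p) ^ s * (∑' k, x k ^ p) ^ s :=
        tsum_rpow_tsum_Iic_mul_le hs _ _ _
    _ ≤ (H ^ p) ^ s * (∑' k, x k ^ p) ^ s := by gcongr
    _ = (H * (∑' k, x k ^ p) ^ (1 / p)) ^ q := by
        rw [ENNReal.mul_rpow_of_nonneg _ _ hq0.le, ← ENNReal.rpow_mul, ← ENNReal.rpow_mul, hps]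
        congr 2
        field_simp
        linarith

theorem iSup_rpow_tsum_Ici_mul_le_of_forall {p q : ℝ} (hp : 0 < p) (hq : 0 < q)
    {a b : ι → ℝ≥0∞} {C : ℝ≥0∞}
    (h : ∀ x : ι → ℝ≥0∞, (∑' k, (∑' i : Iic k, x i * b i) ^ q * a k) ^ (1 / q)
      ≤ C * (∑' k, x k ^ p) ^ (1 / p)) :
    ⨆ k, (∑' i : Ici k, a i) ^ (1 / q) * b k ≤ C := by
  classical
  refine iSup_le fun k₀ => ?_
  set x : ι → ℝ≥0∞ := Pi.single k₀ 1
  have hx : ∑' k, x k ^ p = 1 := by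
    rw [tsum_eq_single k₀ fun k hk => by simp [x, hk, ENNReal.zero_rpow_of_pos hp]]
    simp [x]
  have hb : ∀ k : Ici k₀, b k₀ ≤ ∑' i : Iic k.1, x i * b i := fun k => by
    simpa [x] using ENNReal.le_tsum (f := fun i : Iic k.1 => x i * b i) ⟨k₀, k.2⟩
  have hL : b k₀ ^ q * ∑' k : Ici k₀, a k ≤ ∑' k, (∑' i : Iic k, x i * b i) ^ q * a k :=
    calc b k₀ ^ q * ∑' k : Ici k₀, a k
        ≤ ∑' k : Ici k₀, (∑' i : Iic k.1, x i * b i) ^ q * a k := by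
          rw [← ENNReal.tsum_mul_left]
          exact ENNReal.tsum_le_tsum fun k => mul_le_mul_left (ENNReal.rpow_le_rpow (hb k) hq.le) _
      _ ≤ ∑' k, (∑' i : Iic k, x i * b i) ^ q * a k :=
          ENNReal.tsum_comp_le_tsum_of_injective Subtype.val_injective
            fun k => (∑' i : Iic k, x i * b i) ^ q * a k
  calc (∑' i : Ici k₀, a i) ^ (1 / q) * b k₀ = (b k₀ ^ q * ∑' i : Ici k₀, a i) ^ (1 / q) := by
        rw [ENNReal.mul_rpow_of_nonneg _ _ (by positivity), ← ENNReal.rpow_mul,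
          mul_one_div_cancel hq.ne', ENNReal.rpow_one, mul_comm]
    _ ≤ (∑' k, (∑' i : Iic k, x i * b i) ^ q * a k) ^ (1 / q) :=
        ENNReal.rpow_le_rpow hL (by positivity)
    _ ≤ C := by simpa [hx] using h x

end Hardy

/-- Discrete Hardy inequality, case `p ≤ 1`, `p ≤ q`: the Hardy-type inequality holds for
all non-negative sequences `x` iff `H₁ = sup_k (∑_{i≥k} aᵢ)^{1/q} bₖ < ∞`, and the best
constant is comparable to `H₁` with constants depending only on `p, q`. -/
theorem stmt8 (p q : ℝ) (hp0 : 0 < p) (hp1 : p ≤ 1) (hpq : p ≤ q) :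
    ∃ C : ℝ≥0∞, 0 < C ∧ C ≠ ⊤ ∧
      ∀ (S : Set ℤ) (a b : ℤ → ℝ≥0∞),
        (∀ ⦃j k l : ℤ⦄, j ∈ S → l ∈ S → j ≤ k → k ≤ l → k ∈ S) →
        (∀ k ∈ S, a k ≠ ⊤) →
        (∀ k ∈ S, b k ≠ ⊤) →
        (∀ x : ℤ → ℝ≥0∞,
          (∑' k : S, (∑' i : {i : ℤ // i ∈ S ∧ i ≤ k.1}, x i.1 * b i.1) ^ q * a k.1) ^ (1 / q)
            ≤ C * (⨆ k : S, (∑' i : {i : ℤ // i ∈ S ∧ k.1 ≤ i}, a i.1) ^ (1 / q) * b k.1)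
                * (∑' k : S, x k.1 ^ p) ^ (1 / p)) ∧
        (∀ C' : ℝ≥0∞,
          (∀ x : ℤ → ℝ≥0∞,
            (∑' k : S, (∑' i : {i : ℤ // i ∈ S ∧ i ≤ k.1}, x i.1 * b i.1) ^ q * a k.1) ^ (1 / q)
              ≤ C' * (∑' k : S, x k.1 ^ p) ^ (1 / p)) →
          (⨆ k : S, (∑' i : {i : ℤ // i ∈ S ∧ k.1 ≤ i}, a i.1) ^ (1 / q) * b k.1) ≤ C * C') := by
  refine ⟨1, one_pos, ENNReal.one_ne_top, fun S a b _ _ _ => ?_⟩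
  simp only [tsum_subtype_mem_and_le, tsum_subtype_mem_and_ge, one_mul]
  refine ⟨fun x => rpow_tsum_rpow_tsum_Iic_mul_le hp0 hp1 hpq
    (fun i : S => x i) (fun i => b i) (fun i => a i), fun C' hC' => ?_⟩
  refine iSup_rpow_tsum_Ici_mul_le_of_forall (a := fun i : S => a i) (b := fun i => b i)
    hp0 (hp0.trans_le hpq) fun y => ?_
  simpa [Subtype.val_injective.extend_apply] using hC' (Function.extend Subtype.val y 0)
end

section
/- If {x_k}_{k=−∞}^{M} is a discretizing sequence of W (i.e. W(x_k) ≈ 2^k for k ≤ M, where W(t) = ∫_0^t w) and h is a non-negative non-increasing function on (0,∞), then for any α ≥ 0, ∫_0^∞ W(x)^α w(x) h(x) dx is comparable to ∑_{k=−∞}^{M−1} 2^{k(α+1)} h(x_k), with constants depending only on α and the discretizing constants. -/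
/-!
Cut `(0, ∞)` into the layers `[x_k, x_{k+1})`. On such a layer `W ≤ W(x_{k+1}) ≤ 2^{k+1} D` and
`h ≤ h(x_k)`, which gives the upper bound. For the lower bound use the thicker layers
`[x_{k-m}, x_k)` with `2 D² ≤ 2^m`: each carries `w`-mass at least `2^{k-1} / D`, on it
`W ≥ 2^{k-m} / D` and `h ≥ h(x_k)`, and every point lies in at most `m` of them.
-/

open MeasureTheory Set Filter
open scoped ENNReal Topology

/-- The interval `(0, a) ⊆ ℝ` for `a ∈ [0, ∞]`. -/
def initialSegment (a : ℝ≥0∞) : Set ℝ := {t | 0 < t ∧ ENNReal.ofReal t < a}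

lemma initialSegment_ofReal (t : ℝ) : initialSegment (ENNReal.ofReal t) = Ioo 0 t := by
  ext s
  simp only [initialSegment, mem_ofPred_eq, ENNReal.ofReal_lt_ofReal_iff', mem_Ioo]
  constructor
  · exact fun ⟨hs, hst, _⟩ => ⟨hs, hst⟩
  · exact fun ⟨hs, hst⟩ => ⟨hs, hst, hs.trans hst⟩

lemma initialSegment_mono : Monotone initialSegment :=
  fun _ _ hab _ ht => ⟨ht.1, ht.2.trans_le hab⟩

lemma measurableSet_initialSegment (a : ℝ≥0∞) : MeasurableSet (initialSegment a) :=
  measurableSet_Ioi.inter (ENNReal.measurable_ofReal measurableSet_Iio)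

lemma mem_initialSegment_diff {a b : ℝ≥0∞} {t : ℝ} :
    t ∈ initialSegment b \ initialSegment a ↔
      0 < t ∧ a ≤ ENNReal.ofReal t ∧ ENNReal.ofReal t < b := by
  simp only [initialSegment, Set.mem_sdiff, mem_ofPred_eq, not_and, not_lt]
  constructor
  · exact fun ⟨⟨ht, htb⟩, hta⟩ => ⟨ht, hta ht, htb⟩
  · exact fun ⟨ht, hat, htb⟩ => ⟨⟨ht, htb⟩, fun _ => hat⟩

lemma lintegral_Ioo_le_of_ofReal_le {w : ℝ → ℝ≥0∞} {a : ℝ≥0∞} {t : ℝ}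
    (ht : ENNReal.ofReal t ≤ a) : ∫⁻ s in Ioo 0 t, w s ≤ ∫⁻ s in initialSegment a, w s := by
  rw [← initialSegment_ofReal]
  exact lintegral_mono_set (initialSegment_mono ht)

lemma lintegral_initialSegment_le_of_le_ofReal {w : ℝ → ℝ≥0∞} {a : ℝ≥0∞} {t : ℝ}
    (ht : a ≤ ENNReal.ofReal t) : ∫⁻ s in initialSegment a, w s ≤ ∫⁻ s in Ioo 0 t, w s := by
  rw [← initialSegment_ofReal]
  exact lintegral_mono_set (initialSegment_mono ht)

section Layer

variable {w h : ℝ → ℝ≥0∞} {α : ℝ}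

lemma setLIntegral_diff_initialSegment_le (hw : Measurable w) (hh : AntitoneOn h (Ioi 0))
    (hα : 0 ≤ α) {a b : ℝ≥0∞} (ha₀ : 0 < a) (ha : a ≠ ⊤) :
    ∫⁻ t in initialSegment b \ initialSegment a, (∫⁻ s in Ioo 0 t, w s) ^ α * w t * h t
      ≤ (∫⁻ s in initialSegment b, w s) ^ (α + 1) * h a.toReal := by
  set V := ∫⁻ s in initialSegment b, w s
  have hpt : ∀ t ∈ initialSegment b \ initialSegment a,
      (∫⁻ s in Ioo 0 t, w s) ^ α * w t * h t ≤ V ^ α * h a.toReal * w t := by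
    intro t ht
    obtain ⟨ht₀, hat, htb⟩ := mem_initialSegment_diff.1 ht
    have hW : ∫⁻ s in Ioo 0 t, w s ≤ V := lintegral_Ioo_le_of_ofReal_le htb.le
    have hht : h t ≤ h a.toReal :=
      hh (ENNReal.toReal_pos ha₀.ne' ha) ht₀ (ENNReal.toReal_le_of_le_ofReal ht₀.le hat)
    calc (∫⁻ s in Ioo 0 t, w s) ^ α * w t * h t ≤ V ^ α * w t * h a.toReal := by gcongr
      _ = V ^ α * h a.toReal * w t := by ring
  calc _ ≤ ∫⁻ t in initialSegment b \ initialSegment a, V ^ α * h a.toReal * w t :=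
        setLIntegral_mono'
          ((measurableSet_initialSegment b).diff (measurableSet_initialSegment a)) hpt
    _ = V ^ α * h a.toReal * ∫⁻ t in initialSegment b \ initialSegment a, w t :=
        lintegral_const_mul _ hw
    _ ≤ V ^ α * h a.toReal * V := by gcongr; exact lintegral_mono_set sdiff_subset
    _ = V ^ (α + 1) * h a.toReal := by
        rw [ENNReal.rpow_add_of_nonneg _ _ hα zero_le_one, ENNReal.rpow_one]; ring

lemma le_setLIntegral_diff_initialSegment (hw : Measurable w) (hh : AntitoneOn h (Ioi 0))
    (hα : 0 ≤ α) {a b : ℝ≥0∞} (hb : b ≠ ⊤) :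
    (∫⁻ s in initialSegment a, w s) ^ α * (∫⁻ t in initialSegment b \ initialSegment a, w t)
        * h b.toReal
      ≤ ∫⁻ t in initialSegment b \ initialSegment a, (∫⁻ s in Ioo 0 t, w s) ^ α * w t * h t := by
  set V := ∫⁻ s in initialSegment a, w s
  have hpt : ∀ t ∈ initialSegment b \ initialSegment a,
      V ^ α * h b.toReal * w t ≤ (∫⁻ s in Ioo 0 t, w s) ^ α * w t * h t := by
    intro t ht
    obtain ⟨ht₀, hat, htb⟩ := mem_initialSegment_diff.1 ht
    have hW : V ≤ ∫⁻ s in Ioo 0 t, w s := lintegral_initialSegment_le_of_le_ofReal hat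
    have htb' : t < b.toReal := (ENNReal.ofReal_lt_iff_lt_toReal ht₀.le hb).1 htb
    have hht : h b.toReal ≤ h t := hh ht₀ (ht₀.trans htb') htb'.le
    calc V ^ α * h b.toReal * w t = V ^ α * w t * h b.toReal := by ring
      _ ≤ (∫⁻ s in Ioo 0 t, w s) ^ α * w t * h t := by gcongr
  calc V ^ α * (∫⁻ t in initialSegment b \ initialSegment a, w t) * h b.toReal
      = ∫⁻ t in initialSegment b \ initialSegment a, V ^ α * h b.toReal * w t := by
        rw [lintegral_const_mul _ hw]; ring
    _ ≤ _ := setLIntegral_mono'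
          ((measurableSet_initialSegment b).diff (measurableSet_initialSegment a)) hpt

end Layer

lemma le_lintegral_finsetSum {ι X : Type*} [MeasurableSpace X] {μ : Measure X}
    (s : Finset ι) (f : ι → X → ℝ≥0∞) :
    ∑ i ∈ s, ∫⁻ x, f i x ∂μ ≤ ∫⁻ x, ∑ i ∈ s, f i x ∂μ := by
  induction s using Finset.cons_induction with
  | empty => simp
  | cons i s hi ih =>
    simp only [Finset.sum_cons]
    exact (add_le_add_right ih _).trans (le_lintegral_add _ _)

lemma tsum_setLIntegral_le_of_card_le {ι X : Type*} [MeasurableSpace X] {μ : Measure X}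
    {A : ι → Set X} {S : Set X} (hA : ∀ i, MeasurableSet (A i)) (hAS : ∀ i, A i ⊆ S) {N : ℕ}
    (hN : ∀ (F : Finset ι) (x : X), (∀ i ∈ F, x ∈ A i) → F.card ≤ N) (f : X → ℝ≥0∞) :
    ∑' i, ∫⁻ x in A i, f x ∂μ ≤ N * ∫⁻ x in S, f x ∂μ := by
  classical
  rw [ENNReal.tsum_eq_iSup_sum]
  refine iSup_le fun F => ?_
  have hpt : ∀ x, ∑ i ∈ F, (A i).indicator f x ≤ N * f x := by
    intro x
    rw [Finset.sum_indicator_eq_sum_filter, Finset.sum_const, nsmul_eq_mul]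
    gcongr
    exact_mod_cast hN _ x fun i hi => (Finset.mem_filter.1 hi).2
  calc ∑ i ∈ F, ∫⁻ x in A i, f x ∂μ = ∑ i ∈ F, ∫⁻ x in S, (A i).indicator f x ∂μ := by
        refine Finset.sum_congr rfl fun i _ => ?_
        rw [lintegral_indicator (hA i), Measure.restrict_restrict (hA i),
          inter_eq_left.2 (hAS i)]
    _ ≤ ∫⁻ x in S, ∑ i ∈ F, (A i).indicator f x ∂μ := le_lintegral_finsetSum _ _
    _ ≤ ∫⁻ x in S, N * f x ∂μ := lintegral_mono hpt
    _ = N * ∫⁻ x in S, f x ∂μ := lintegral_const_mul' _ _ (ENNReal.natCast_ne_top N)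

lemma Int.card_le_of_forall_lt_add {F : Finset ℤ} {m : ℕ} (hF : ∀ i ∈ F, ∀ j ∈ F, j < i + m) :
    F.card ≤ m := by
  rcases F.eq_empty_or_nonempty with rfl | hne
  · simp
  have hsub : F ⊆ Finset.Ico (F.min' hne) (F.min' hne + m) := fun j hj =>
    Finset.mem_Ico.2 ⟨F.min'_le j hj, hF _ (F.min'_mem hne) j hj⟩
  simpa [Int.card_Ico] using Finset.card_le_card hsub

section Sequence

variable {x : ℤ → ℝ≥0∞} {M : WithTop ℤ}

lemma exists_le_lt_succ_of_tendsto_atBot {β : Type*} [CompleteLinearOrder β] [TopologicalSpace β]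
    [OrderTopology β] {y : ℤ → β} {b a : β} (hy : Tendsto y atBot (𝓝 b)) (hba : b < a)
    (ha : a < ⨆ k : {k : ℤ // (k : WithTop ℤ) ≤ M}, y k) :
    ∃ k : ℤ, ((k + 1 : ℤ) : WithTop ℤ) ≤ M ∧ y k ≤ a ∧ a < y (k + 1) := by
  obtain ⟨j, hj⟩ := eventually_atBot.1 (hy.eventually_lt_const hba)
  obtain ⟨k₁, hk₁⟩ := lt_iSup_iff.1 ha
  obtain ⟨k, ⟨hkM, hak⟩, hleast⟩ := Int.exists_least_of_bdd
    (P := fun z : ℤ => (z : WithTop ℤ) ≤ M ∧ a < y z)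
    ⟨j, fun z hz => le_of_not_gt fun hzj => (hj z hzj.le).not_gt hz.2⟩ ⟨k₁.1, k₁.2, hk₁⟩
  refine ⟨k - 1, by simpa using hkM, le_of_not_gt fun hlt => ?_, by simpa using hak⟩
  have := hleast (k - 1) ⟨(WithTop.coe_le_coe.2 (by omega)).trans hkM, hlt⟩
  omega

lemma Ioi_subset_iUnion_initialSegment_diff (hx0 : Tendsto x atBot (𝓝 0))
    (hsup : ⨆ k : {k : ℤ // (k : WithTop ℤ) ≤ M}, x k = ⊤) :
    Ioi (0 : ℝ) ⊆ ⋃ k : {k : ℤ // ((k + 1 : ℤ) : WithTop ℤ) ≤ M},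
      initialSegment (x (k + 1)) \ initialSegment (x k) := by
  intro t ht
  obtain ⟨k, hkM, hxk, hxk1⟩ := exists_le_lt_succ_of_tendsto_atBot hx0
    (ENNReal.ofReal_pos.2 ht) (hsup ▸ ENNReal.ofReal_lt_top)
  exact mem_iUnion.2 ⟨⟨k, hkM⟩, mem_initialSegment_diff.2 ⟨ht, hxk, hxk1⟩⟩

lemma pos_lt_top_of_strictMonoOn (hx : StrictMonoOn x {k : ℤ | (k : WithTop ℤ) ≤ M}) {k : ℤ}
    (hk : ((k + 1 : ℤ) : WithTop ℤ) ≤ M) : 0 < x k ∧ x k < ⊤ := by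
  have hkM : (k : WithTop ℤ) ≤ M := (WithTop.coe_le_coe.2 (by omega)).trans hk
  have hk1M : ((k - 1 : ℤ) : WithTop ℤ) ≤ M := (WithTop.coe_le_coe.2 (by omega)).trans hk
  exact ⟨zero_le.trans_lt (hx hk1M hkM (by omega)),
    (hx hkM hk (by omega)).trans_le le_top⟩

end Sequence

lemma ENNReal.exists_nat_le_two_rpow {a : ℝ≥0∞} (ha : a ≠ ⊤) : ∃ m : ℕ, a ≤ 2 ^ (m : ℝ) := by
  obtain ⟨m, hm⟩ := ENNReal.exists_nat_gt ha
  refine ⟨m, hm.le.trans ?_⟩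
  rw [ENNReal.rpow_natCast]
  exact_mod_cast Nat.lt_two_pow_self.le

lemma ENNReal.two_rpow_add (a b : ℝ) : (2 : ℝ≥0∞) ^ (a + b) = 2 ^ a * 2 ^ b :=
  ENNReal.rpow_add a b two_ne_zero ENNReal.ofNat_ne_top

section Discretization

variable {w h : ℝ → ℝ≥0∞} {x : ℤ → ℝ≥0∞} {M : WithTop ℤ} {α : ℝ} {D : ℝ≥0∞}

lemma setLIntegral_diff_initialSegment_le_two_rpow (hw : Measurable w)
    (hh : AntitoneOn h (Ioi 0)) (hα : 0 ≤ α) (hx : StrictMonoOn x {k : ℤ | (k : WithTop ℤ) ≤ M})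
    (hdisc : ∀ k : ℤ, (k : WithTop ℤ) ≤ M → ∫⁻ s in initialSegment (x k), w s ≤ D * 2 ^ (k : ℝ))
    {k : ℤ} (hk : ((k + 1 : ℤ) : WithTop ℤ) ≤ M) :
    ∫⁻ t in initialSegment (x (k + 1)) \ initialSegment (x k),
        (∫⁻ s in Ioo 0 t, w s) ^ α * w t * h t
      ≤ (2 * D) ^ (α + 1) * (2 ^ ((k : ℝ) * (α + 1)) * h (x k).toReal) := by
  obtain ⟨hxk₀, hxk⟩ := pos_lt_top_of_strictMonoOn hx hk
  have hV : ∫⁻ s in initialSegment (x (k + 1)), w s ≤ 2 * D * 2 ^ (k : ℝ) := by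
    calc _ ≤ D * 2 ^ ((k + 1 : ℤ) : ℝ) := hdisc _ hk
      _ = 2 * D * 2 ^ (k : ℝ) := by
        rw [Int.cast_add, Int.cast_one, ENNReal.two_rpow_add, ENNReal.rpow_one]; ring
  calc _ ≤ (∫⁻ s in initialSegment (x (k + 1)), w s) ^ (α + 1) * h (x k).toReal :=
        setLIntegral_diff_initialSegment_le hw hh hα hxk₀ hxk.ne
    _ ≤ (2 * D * 2 ^ (k : ℝ)) ^ (α + 1) * h (x k).toReal := by gcongr
    _ = (2 * D) ^ (α + 1) * (2 ^ ((k : ℝ) * (α + 1)) * h (x k).toReal) := by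
        rw [ENNReal.mul_rpow_of_nonneg _ _ (by linarith), ← ENNReal.rpow_mul, mul_assoc]

theorem lintegral_le_mul_tsum (hw : Measurable w) (hh : AntitoneOn h (Ioi 0)) (hα : 0 ≤ α)
    (hx : StrictMonoOn x {k : ℤ | (k : WithTop ℤ) ≤ M}) (hx0 : Tendsto x atBot (𝓝 0))
    (hsup : ⨆ k : {k : ℤ // (k : WithTop ℤ) ≤ M}, x k = ⊤)
    (hdisc : ∀ k : ℤ, (k : WithTop ℤ) ≤ M → ∫⁻ s in initialSegment (x k), w s ≤ D * 2 ^ (k : ℝ)) :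
    ∫⁻ t in Ioi 0, (∫⁻ s in Ioo 0 t, w s) ^ α * w t * h t
      ≤ (2 * D) ^ (α + 1) * ∑' k : {k : ℤ // ((k + 1 : ℤ) : WithTop ℤ) ≤ M},
          2 ^ ((k.1 : ℝ) * (α + 1)) * h (x k).toReal :=
  calc _ ≤ ∫⁻ t in ⋃ k : {k : ℤ // ((k + 1 : ℤ) : WithTop ℤ) ≤ M},
          initialSegment (x (k + 1)) \ initialSegment (x k),
            (∫⁻ s in Ioo 0 t, w s) ^ α * w t * h t :=
        lintegral_mono_set (Ioi_subset_iUnion_initialSegment_diff hx0 hsup)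
    _ ≤ ∑' k : {k : ℤ // ((k + 1 : ℤ) : WithTop ℤ) ≤ M},
          ∫⁻ t in initialSegment (x (k + 1)) \ initialSegment (x k),
            (∫⁻ s in Ioo 0 t, w s) ^ α * w t * h t := lintegral_iUnion_le _ _
    _ ≤ _ := by
        rw [← ENNReal.tsum_mul_left]
        exact ENNReal.tsum_le_tsum fun k =>
          setLIntegral_diff_initialSegment_le_two_rpow hw hh hα hx hdisc k.2

lemma two_rpow_sub_one_le_mul_setLIntegral
    (hdisc : ∀ k : ℤ, (k : WithTop ℤ) ≤ M →
      ∫⁻ s in initialSegment (x k), w s ≤ D * 2 ^ (k : ℝ) ∧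
      2 ^ (k : ℝ) ≤ D * ∫⁻ s in initialSegment (x k), w s)
    {m : ℕ} (hm : D * D * 2 ≤ 2 ^ (m : ℝ)) {k : ℤ} (hk : (k : WithTop ℤ) ≤ M) :
    2 ^ ((k : ℝ) - 1) ≤ D * ∫⁻ t in initialSegment (x k) \ initialSegment (x (k - m)), w t := by
  have hkm : ((k - m : ℤ) : WithTop ℤ) ≤ M := (WithTop.coe_le_coe.2 (by omega)).trans hk
  have hsplit : ∫⁻ s in initialSegment (x k), w s ≤ (∫⁻ s in initialSegment (x (k - m)), w s)
      + ∫⁻ t in initialSegment (x k) \ initialSegment (x (k - m)), w t :=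
    (lintegral_mono_set le_sup_sdiff).trans (lintegral_union_le _ _ _)
  -- `D² · 2 ≤ 2 ^ m` makes the `w`-mass of `(0, x (k - m))` at most half of that of `(0, x k)`.
  have hsmall : D * ∫⁻ s in initialSegment (x (k - m)), w s ≤ 2 ^ ((k : ℝ) - 1) :=
    calc _ ≤ D * (D * 2 ^ ((k - m : ℤ) : ℝ)) := by gcongr; exact (hdisc _ hkm).1
      _ = D * D * 2 * 2 ^ ((k : ℝ) - m - 1) := by
        rw [show ((k - m : ℤ) : ℝ) = 1 + ((k : ℝ) - m - 1) by push_cast; ring,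
          ENNReal.two_rpow_add, ENNReal.rpow_one]
        ring
      _ ≤ 2 ^ (m : ℝ) * 2 ^ ((k : ℝ) - m - 1) := by gcongr
      _ = 2 ^ ((k : ℝ) - 1) := by rw [← ENNReal.two_rpow_add]; ring_nf
  refine (ENNReal.add_le_add_iff_left (a := 2 ^ ((k : ℝ) - 1)) (by simp)).1 ?_
  calc 2 ^ ((k : ℝ) - 1) + 2 ^ ((k : ℝ) - 1) = (2 : ℝ≥0∞) ^ (k : ℝ) := by
        conv_rhs => rw [← add_sub_cancel 1 (k : ℝ), ENNReal.two_rpow_add, ENNReal.rpow_one]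
        exact (two_mul _).symm
    _ ≤ D * ∫⁻ s in initialSegment (x k), w s := (hdisc k hk).2
    _ ≤ D * (∫⁻ s in initialSegment (x (k - m)), w s)
          + D * ∫⁻ t in initialSegment (x k) \ initialSegment (x (k - m)), w t := by
        rw [← mul_add]; gcongr
    _ ≤ _ := by gcongr

lemma two_rpow_mul_le_setLIntegral_diff_initialSegment (hw : Measurable w)
    (hh : AntitoneOn h (Ioi 0)) (hα : 0 ≤ α) (hx : StrictMonoOn x {k : ℤ | (k : WithTop ℤ) ≤ M})
    (hdisc : ∀ k : ℤ, (k : WithTop ℤ) ≤ M →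
      ∫⁻ s in initialSegment (x k), w s ≤ D * 2 ^ (k : ℝ) ∧
      2 ^ (k : ℝ) ≤ D * ∫⁻ s in initialSegment (x k), w s)
    {m : ℕ} (hm : D * D * 2 ≤ 2 ^ (m : ℝ)) {k : ℤ} (hk : ((k + 1 : ℤ) : WithTop ℤ) ≤ M) :
    2 ^ ((k : ℝ) * (α + 1)) * h (x k).toReal
      ≤ 2 ^ ((m : ℝ) * α + 1) * D ^ (α + 1) *
        ∫⁻ t in initialSegment (x k) \ initialSegment (x (k - m)),
          (∫⁻ s in Ioo 0 t, w s) ^ α * w t * h t := by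
  have hkM : (k : WithTop ℤ) ≤ M := (WithTop.coe_le_coe.2 (by omega)).trans hk
  have hkm : ((k - m : ℤ) : WithTop ℤ) ≤ M := (WithTop.coe_le_coe.2 (by omega)).trans hk
  set V := ∫⁻ s in initialSegment (x (k - m)), w s
  set L := ∫⁻ t in initialSegment (x k) \ initialSegment (x (k - m)), w t
  have hVα : (2 : ℝ≥0∞) ^ (((k : ℝ) - m) * α) ≤ D ^ α * V ^ α := by
    have hV := (hdisc _ hkm).2
    rw [Int.cast_sub, Int.cast_natCast] at hV
    rw [ENNReal.rpow_mul, ← ENNReal.mul_rpow_of_nonneg _ _ hα]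
    gcongr
  calc 2 ^ ((k : ℝ) * (α + 1)) * h (x k).toReal
      = 2 ^ ((m : ℝ) * α + 1) * (2 ^ (((k : ℝ) - m) * α) * 2 ^ ((k : ℝ) - 1))
          * h (x k).toReal := by
        rw [← ENNReal.two_rpow_add, ← ENNReal.two_rpow_add]; ring_nf
    _ ≤ 2 ^ ((m : ℝ) * α + 1) * ((D ^ α * V ^ α) * (D * L)) * h (x k).toReal := by
        gcongr
        exact two_rpow_sub_one_le_mul_setLIntegral hdisc hm hkM
    _ = 2 ^ ((m : ℝ) * α + 1) * D ^ (α + 1) * (V ^ α * L * h (x k).toReal) := by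
        rw [ENNReal.rpow_add_of_nonneg _ _ hα zero_le_one, ENNReal.rpow_one]; ring
    _ ≤ _ := by
        gcongr
        exact le_setLIntegral_diff_initialSegment hw hh hα (pos_lt_top_of_strictMonoOn hx hk).2.ne

theorem tsum_le_mul_lintegral (hw : Measurable w) (hh : AntitoneOn h (Ioi 0)) (hα : 0 ≤ α)
    (hx : StrictMonoOn x {k : ℤ | (k : WithTop ℤ) ≤ M})
    (hdisc : ∀ k : ℤ, (k : WithTop ℤ) ≤ M →
      ∫⁻ s in initialSegment (x k), w s ≤ D * 2 ^ (k : ℝ) ∧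
      2 ^ (k : ℝ) ≤ D * ∫⁻ s in initialSegment (x k), w s)
    {m : ℕ} (hm : D * D * 2 ≤ 2 ^ (m : ℝ)) :
    ∑' k : {k : ℤ // ((k + 1 : ℤ) : WithTop ℤ) ≤ M}, 2 ^ ((k.1 : ℝ) * (α + 1)) * h (x k).toReal
      ≤ 2 ^ ((m : ℝ) * α + 1) * D ^ (α + 1) * m *
          ∫⁻ t in Ioi 0, (∫⁻ s in Ioo 0 t, w s) ^ α * w t * h t := by
  have hoverlap : ∀ (F : Finset {k : ℤ // ((k + 1 : ℤ) : WithTop ℤ) ≤ M}) (t : ℝ),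
      (∀ k ∈ F, t ∈ initialSegment (x k) \ initialSegment (x (k - m))) → F.card ≤ m := by
    intro F t hF
    rw [← Finset.card_map (Function.Embedding.subtype _)]
    refine Int.card_le_of_forall_lt_add ?_
    simp only [Finset.mem_map, Function.Embedding.coe_subtype]
    rintro _ ⟨i, hi, rfl⟩ _ ⟨j, hj, rfl⟩
    by_contra! hij
    obtain ⟨-, -, hti⟩ := mem_initialSegment_diff.1 (hF i hi)
    obtain ⟨-, htj, -⟩ := mem_initialSegment_diff.1 (hF j hj)
    have hxij : x i ≤ x (j - m) := hx.monotoneOn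
      ((WithTop.coe_le_coe.2 (by omega)).trans i.2)
      ((WithTop.coe_le_coe.2 (by omega)).trans j.2) (by omega)
    exact (hti.trans_le (hxij.trans htj)).false
  calc _ ≤ ∑' k : {k : ℤ // ((k + 1 : ℤ) : WithTop ℤ) ≤ M},
          2 ^ ((m : ℝ) * α + 1) * D ^ (α + 1) *
            ∫⁻ t in initialSegment (x k) \ initialSegment (x (k - m)),
              (∫⁻ s in Ioo 0 t, w s) ^ α * w t * h t :=
        ENNReal.tsum_le_tsum fun k =>
          two_rpow_mul_le_setLIntegral_diff_initialSegment hw hh hα hx hdisc hm k.2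
    _ ≤ _ := by
        rw [ENNReal.tsum_mul_left, mul_assoc _ (m : ℝ≥0∞)]
        gcongr
        exact tsum_setLIntegral_le_of_card_le
          (fun _ => (measurableSet_initialSegment _).diff (measurableSet_initialSegment _))
          (fun _ _ ht => (mem_initialSegment_diff.1 ht).1) hoverlap _

end Discretization

/-- If `{x_k}_{k=−∞}^{M}` is a discretizing sequence of `W` (a strictly increasing
covering sequence with `W(x_k) ≈ 2^k`, `W(t) = ∫_0^t w`) and `h` is non-negative and
non-increasing on `(0,∞)`, then for `α ≥ 0`,
`∫_0^∞ W^α w h ≈ ∑_{k ≤ M−1} 2^{k(α+1)} h(x_k)`, with constants depending only on `α`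
and the discretizing constant `D`. -/
theorem stmt13 (α : ℝ) (hα : 0 ≤ α) (D : ℝ≥0∞) (hD1 : 1 ≤ D) (hD : D ≠ ⊤) :
    ∃ C : ℝ≥0∞, 0 < C ∧ C ≠ ⊤ ∧
      ∀ (M : WithTop ℤ) (w : ℝ → ℝ≥0∞) (x : ℤ → ℝ≥0∞) (h : ℝ → ℝ≥0∞),
        Measurable w →
        (∀ᵐ t ∂(volume.restrict (Ioi (0:ℝ))), 0 < w t ∧ w t ≠ ⊤) →
        (∀ j k : ℤ, (j : WithTop ℤ) ≤ M → (k : WithTop ℤ) ≤ M → j < k → x j < x k) →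
        Tendsto x atBot (nhds 0) →
        (⨆ k : {k : ℤ // (k : WithTop ℤ) ≤ M}, x k.1) = ⊤ →
        (∀ k : ℤ, (k : WithTop ℤ) ≤ M →
          (∫⁻ s in {t : ℝ | 0 < t ∧ ENNReal.ofReal t < x k}, w s) ≤ D * (2 : ℝ≥0∞) ^ (k : ℝ) ∧
          (2 : ℝ≥0∞) ^ (k : ℝ) ≤ D * ∫⁻ s in {t : ℝ | 0 < t ∧ ENNReal.ofReal t < x k}, w s) →
        AntitoneOn h (Ioi (0:ℝ)) →
        (∫⁻ t in Ioi (0:ℝ), (∫⁻ s in Ioo (0:ℝ) t, w s) ^ α * w t * h t)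
            ≤ C * ∑' k : {k : ℤ // ((k + 1 : ℤ) : WithTop ℤ) ≤ M},
                (2 : ℝ≥0∞) ^ ((k.1 : ℝ) * (α + 1)) * h ((x k.1).toReal) ∧
        (∑' k : {k : ℤ // ((k + 1 : ℤ) : WithTop ℤ) ≤ M},
            (2 : ℝ≥0∞) ^ ((k.1 : ℝ) * (α + 1)) * h ((x k.1).toReal))
            ≤ C * ∫⁻ t in Ioi (0:ℝ), (∫⁻ s in Ioo (0:ℝ) t, w s) ^ α * w t * h t := by
  obtain ⟨m, hm⟩ := ENNReal.exists_nat_le_two_rpow (a := D * D * 2) (by finiteness)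
  refine ⟨(2 * D) ^ (α + 1) + 2 ^ ((m : ℝ) * α + 1) * D ^ (α + 1) * m, ?_, by finiteness, ?_⟩
  · exact (ENNReal.rpow_pos (ENNReal.mul_pos two_ne_zero (zero_lt_one.trans_le hD1).ne')
    (by finiteness)).trans_le le_self_add
  intro M w x h hw _ hx hx0 hsup hdisc hh
  have hx' : StrictMonoOn x {k : ℤ | (k : WithTop ℤ) ≤ M} := fun j hj k hk => hx j k hj hk
  exact ⟨(lintegral_le_mul_tsum hw hh hα hx' hx0 hsup fun k hk => (hdisc k hk).1).trans
      (by gcongr; exact le_self_add),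
    (tsum_le_mul_lintegral hw hh hα hx' hdisc hm).trans (by gcongr; exact le_add_self)⟩
end

section
/- For 0 < r < 1, any q, and any non-negative exponent configuration, if V_r(x_k, t) is non-decreasing in t and (p−q)/(p(1−q)) < 1 with 0 < q < p and q < 1, then ∫_{x_k}^{x_{k+1}} (∫_t^{x_{k+1}} u)^{q/(p−q)} u(t) V_r(x_k,t)^{pq/(p−q)} dt ≲ (∫_{x_k}^{x_{k+1}} (∫_t^{x_{k+1}} u)^{q/(1−q)} u(t) V_r(x_k,t)^{q/(1−q)} dt)^{p(1−q)/(p−q)}, with implicit constant depending only on p, q. -/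
open MeasureTheory Set Filter
open scoped ENNReal

/-! Write `W t = ν (Ioo t b)` for the tail mass of an atomless measure `ν` (here `ν = u dt`).
As `ν` has no atoms, `{W < c}` has `ν`-mass at most `c`; taking `c = W t / 2` gives
`W t ^ (α + 1) ≤ 2 ^ (α + 1) ∫_t^b W ^ α dν`, and as `V` is non-decreasing this bounds
`W t ^ (α + 1) V t ^ α` by `2 ^ (α + 1) Φ`, where `Φ = ∫_a^b W ^ α V ^ α dν`. With
`α = q / (1 - q)` and `θ = p (1 - q) / (p - q) ≥ 1` the left integrand is
`W ^ α V ^ α · (W ^ (α + 1) V ^ α) ^ (θ - 1)`, so its integral is at most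
`(2 ^ (α + 1) Φ) ^ (θ - 1) Φ = 2 ^ ((α + 1) (θ - 1)) Φ ^ θ`.
-/

namespace MeasureTheory

variable {ν : Measure ℝ} [NullSingletonClass ν] {b : ℝ}

theorem measure_le_of_forall_measure_Ioo_le {C : Set ℝ} {c : ℝ≥0∞} (hbdd : BddBelow C)
    (hCb : C ⊆ Iio b) (hc : ∀ s ∈ C, ν (Ioo s b) ≤ c) : ν C ≤ c := by
  rcases C.eq_empty_or_nonempty with rfl | hne
  · simp
  obtain ⟨u, hu_anti, -, hu_lim, huC⟩ :=
    (isGLB_csInf hne hbdd).exists_seq_antitone_tendsto hne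
  have hsub : C ⊆ {sInf C} ∪ ⋃ n, Ioo (u n) b := by
    intro y hy
    rcases (csInf_le hbdd hy).eq_or_lt with h | h
    · exact Or.inl h.symm
    · obtain ⟨n, hn⟩ := (hu_lim.eventually (gt_mem_nhds h)).exists
      exact Or.inr (mem_iUnion.2 ⟨n, hn, hCb hy⟩)
  calc ν C ≤ ν ({sInf C} ∪ ⋃ n, Ioo (u n) b) := measure_mono hsub
    _ ≤ ν {sInf C} + ν (⋃ n, Ioo (u n) b) := measure_union_le _ _
    _ = ⨆ n, ν (Ioo (u n) b) := by
      rw [measure_singleton, zero_add,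
        Monotone.measure_iUnion fun m n h => Ioo_subset_Ioo_left (hu_anti h)]
    _ ≤ c := iSup_le fun n => hc _ (huC n)

theorem rpow_mul_measure_Ioo_sub_le_setLIntegral {α : ℝ} (hα : 0 ≤ α) (t : ℝ) (c : ℝ≥0∞) :
    c ^ α * (ν (Ioo t b) - c) ≤ ∫⁻ s in Ioo t b, ν (Ioo s b) ^ α ∂ν := by
  have hW : Measurable fun s => ν (Ioo s b) :=
    Antitone.measurable fun _ _ h => measure_mono (Ioo_subset_Ioo_left h)
  have hlow : ν (Ioo t b) - c ≤ ν ({s | c ≤ ν (Ioo s b)} ∩ Ioo t b) := by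
    rw [tsub_le_iff_right]
    calc ν (Ioo t b)
        ≤ ν ({s | c ≤ ν (Ioo s b)} ∩ Ioo t b) + ν (Ioo t b \ {s | c ≤ ν (Ioo s b)}) := by
          rw [inter_comm]; exact measure_le_inter_add_sdiff _ _ _
      _ ≤ _ := by
        gcongr
        exact measure_le_of_forall_measure_Ioo_le ⟨t, fun s hs => hs.1.1.le⟩
          (fun s hs => hs.1.2) (fun s hs => (not_le.1 hs.2).le)
  calc c ^ α * (ν (Ioo t b) - c)
      ≤ c ^ α * ν.restrict (Ioo t b) {s | c ^ α ≤ ν (Ioo s b) ^ α} := by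
        gcongr
        refine hlow.trans ((measure_mono ?_).trans (Measure.le_restrict_apply _ _))
        exact fun s hs => ⟨ENNReal.rpow_le_rpow hs.1 hα, hs.2⟩
    _ ≤ _ := mul_meas_ge_le_lintegral (hW.pow_const α) _

theorem measure_Ioo_rpow_le_setLIntegral {α : ℝ} (hα : 0 ≤ α) (t : ℝ) :
    ν (Ioo t b) ^ (α + 1) ≤ 2 ^ (α + 1) * ∫⁻ s in Ioo t b, ν (Ioo s b) ^ α ∂ν := by
  have hα1 : 0 < α + 1 := by linarith
  by_cases hM : ν (Ioo t b) = ∞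
  · have hI : ∫⁻ s in Ioo t b, ν (Ioo s b) ^ α ∂ν = ∞ := by
      simpa [hM] using rpow_mul_measure_Ioo_sub_le_setLIntegral (ν := ν) (b := b) hα t 1
    rw [hM, hI, ENNReal.mul_top (by positivity)]
    exact le_top
  calc ν (Ioo t b) ^ (α + 1)
      = 2 ^ (α + 1) * ((ν (Ioo t b) / 2) ^ α * (ν (Ioo t b) - ν (Ioo t b) / 2)) := by
        have h : (ν (Ioo t b) / 2) ^ α * (ν (Ioo t b) / 2) = (ν (Ioo t b) / 2) ^ (α + 1) := by
          rw [ENNReal.rpow_add_of_nonneg _ _ hα zero_le_one, ENNReal.rpow_one]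
        rw [ENNReal.sub_half hM, h, ← ENNReal.mul_rpow_of_nonneg _ _ hα1.le,
          ENNReal.mul_div_cancel two_ne_zero ENNReal.ofNat_ne_top]
    _ ≤ _ := by gcongr; exact rpow_mul_measure_Ioo_sub_le_setLIntegral hα t _

theorem setLIntegral_measure_Ioo_rpow_mul_rpow_le {α θ : ℝ} (hα : 0 ≤ α) (hθ : 1 ≤ θ) {a : ℝ}
    {V : ℝ → ℝ≥0∞} (hV : MonotoneOn V (Ioo a b)) :
    ∫⁻ t in Ioo a b, ν (Ioo t b) ^ (α + (α + 1) * (θ - 1)) * V t ^ (α * θ) ∂ν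
      ≤ 2 ^ ((α + 1) * (θ - 1)) * (∫⁻ t in Ioo a b, ν (Ioo t b) ^ α * V t ^ α ∂ν) ^ θ := by
  set Φ := ∫⁻ t in Ioo a b, ν (Ioo t b) ^ α * V t ^ α ∂ν
  have hθ1 : 0 ≤ θ - 1 := by linarith
  by_cases hΦ : Φ = ∞
  · rw [hΦ, ENNReal.top_rpow_of_pos (by linarith),
      ENNReal.mul_top (ENNReal.rpow_pos two_pos ENNReal.ofNat_ne_top).ne']
    exact le_top
  have key : ∀ t ∈ Ioo a b, ν (Ioo t b) ^ (α + 1) * V t ^ α ≤ 2 ^ (α + 1) * Φ := by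
    intro t ht
    calc ν (Ioo t b) ^ (α + 1) * V t ^ α
        ≤ 2 ^ (α + 1) * (∫⁻ s in Ioo t b, ν (Ioo s b) ^ α ∂ν) * V t ^ α := by
          gcongr; exact measure_Ioo_rpow_le_setLIntegral hα t
      _ ≤ 2 ^ (α + 1) * ∫⁻ s in Ioo t b, ν (Ioo s b) ^ α * V t ^ α ∂ν := by
          rw [mul_assoc]; gcongr; exact lintegral_mul_const_le _ _
      _ ≤ 2 ^ (α + 1) * ∫⁻ s in Ioo t b, ν (Ioo s b) ^ α * V s ^ α ∂ν := by
          gcongr 2 ^ (α + 1) * ?_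
          refine setLIntegral_mono' measurableSet_Ioo fun s hs => ?_
          gcongr
          exact hV ht ⟨ht.1.trans hs.1, hs.2⟩ hs.1.le
      _ ≤ 2 ^ (α + 1) * Φ := by gcongr; exact lintegral_mono_set (Ioo_subset_Ioo_left ht.1.le)
  have pointwise : ∀ t ∈ Ioo a b,
      ν (Ioo t b) ^ (α + (α + 1) * (θ - 1)) * V t ^ (α * θ)
        ≤ (2 ^ (α + 1) * Φ) ^ (θ - 1) * (ν (Ioo t b) ^ α * V t ^ α) := by
    intro t ht
    calc ν (Ioo t b) ^ (α + (α + 1) * (θ - 1)) * V t ^ (α * θ)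
        = (ν (Ioo t b) ^ (α + 1) * V t ^ α) ^ (θ - 1) * (ν (Ioo t b) ^ α * V t ^ α) := by
          rw [show α * θ = α + α * (θ - 1) by ring, ENNReal.rpow_add_of_nonneg _ _ hα (by positivity),
            ENNReal.rpow_add_of_nonneg _ _ hα (by positivity), ENNReal.mul_rpow_of_nonneg _ _ hθ1,
            ENNReal.rpow_mul, ENNReal.rpow_mul]
          ring
      _ ≤ _ := by gcongr ?_ ^ _ * _; exact key t ht
  calc ∫⁻ t in Ioo a b, ν (Ioo t b) ^ (α + (α + 1) * (θ - 1)) * V t ^ (α * θ) ∂ν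
      ≤ ∫⁻ t in Ioo a b, (2 ^ (α + 1) * Φ) ^ (θ - 1) * (ν (Ioo t b) ^ α * V t ^ α) ∂ν :=
        setLIntegral_mono' measurableSet_Ioo pointwise
    _ = (2 ^ (α + 1) * Φ) ^ (θ - 1) * Φ :=
        lintegral_const_mul' _ _ (ENNReal.rpow_ne_top_of_nonneg hθ1
          (ENNReal.mul_ne_top (ENNReal.rpow_ne_top_of_nonneg (by linarith) ENNReal.ofNat_ne_top) hΦ))
    _ = 2 ^ ((α + 1) * (θ - 1)) * Φ ^ θ := by
        rw [ENNReal.mul_rpow_of_nonneg _ _ hθ1, ← ENNReal.rpow_mul, mul_assoc]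
        congr 1
        conv_rhs => rw [show θ = θ - 1 + 1 by ring]
        rw [ENNReal.rpow_add_of_nonneg _ _ hθ1 zero_le_one, ENNReal.rpow_one]

end MeasureTheory

/-- Heinig–Stepanov-type comparison on an interval `(a,b)`: for `0 < q < p`, `q < 1` and
`(p−q)/(p(1−q)) < 1`, for any weight `u` and any non-negative non-decreasing `V`,
`∫_a^b (∫_t^b u)^{q/(p−q)} u(t) V(t)^{pq/(p−q)} dt
  ≲ (∫_a^b (∫_t^b u)^{q/(1−q)} u(t) V(t)^{q/(1−q)} dt)^{p(1−q)/(p−q)}`,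
with implicit constant depending only on `p, q`. -/
theorem stmt14 (p q : ℝ) (hq0 : 0 < q) (hqp : q < p) (hq1 : q < 1)
    (hcond : (p - q) / (p * (1 - q)) < 1) :
    ∃ C : ℝ≥0∞, 0 < C ∧ C ≠ ⊤ ∧
      ∀ (a b : ℝ) (_ : a < b) (u V : ℝ → ℝ≥0∞),
        Measurable u →
        (∀ᵐ t ∂(volume.restrict (Ioo a b)), 0 < u t ∧ u t ≠ ⊤) →
        MonotoneOn V (Ioo a b) →
        (∫⁻ t in Ioo a b,
            (∫⁻ s in Ioo t b, u s) ^ (q / (p - q)) * u t * V t ^ (p * q / (p - q)))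
          ≤ C * (∫⁻ t in Ioo a b,
              (∫⁻ s in Ioo t b, u s) ^ (q / (1 - q)) * u t
                * V t ^ (q / (1 - q))) ^ (p * (1 - q) / (p - q)) := by
  have hpq : 0 < p - q := by linarith
  have h1q : 0 < 1 - q := by linarith
  set α := q / (1 - q) with hα
  set θ := p * (1 - q) / (p - q) with hθ_def
  have hθ : 1 ≤ θ := by
    rw [le_div_iff₀ hpq]
    linarith [(div_lt_one (by nlinarith : 0 < p * (1 - q))).1 hcond]
  have e₁ : q / (p - q) = α + (α + 1) * (θ - 1) := by rw [hα, hθ_def]; field_simp; ring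
  have e₂ : p * q / (p - q) = α * θ := by rw [hα, hθ_def]; field_simp
  refine ⟨2 ^ ((α + 1) * (θ - 1)), ENNReal.rpow_pos two_pos ENNReal.ofNat_ne_top,
    ENNReal.rpow_ne_top_of_nonneg (mul_nonneg (by positivity) (by linarith)) ENNReal.ofNat_ne_top, ?_⟩
  intro a b _ u V hu hfin hV
  set ν := volume.withDensity u
  have hW : ∀ t, ∫⁻ s in Ioo t b, u s = ν (Ioo t b) := fun t =>
    (withDensity_apply u measurableSet_Ioo).symm
  have hdens : ∀ e f : ℝ, ∫⁻ t in Ioo a b, ν (Ioo t b) ^ e * u t * V t ^ f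
      = ∫⁻ t in Ioo a b, ν (Ioo t b) ^ e * V t ^ f ∂ν := fun e f => by
    rw [setLIntegral_withDensity_eq_setLIntegral_mul_non_measurable _ hu _ measurableSet_Ioo
      (hfin.mono fun t ht => ht.2.lt_top)]
    exact lintegral_congr fun t => by simp only [Pi.mul_apply]; ring
  simp only [hW, hdens, e₁, e₂]
  exact setLIntegral_measure_Ioo_rpow_mul_rpow_le (by positivity) hθ hV
end

section
/- For 0 < q < 1 and any x < y in [0,∞] and weight u on (x,y), ess sup_{t ∈ (x,y)} (∫_t^y u)^{1/q} V(t) ≤ C (∫_x^y (∫_s^y u)^{q/(1−q)} u(s) V(s)^{q/(1−q)} ds)^{(1−q)/q} for every non-negative non-decreasing function V on (x,y), where C depends only on q. -/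
/-!
Write `μ = u · dx` on `(x,y)` and `W t = μ (t,∞)`. Since `μ` has no atoms, the set `{W ≤ c}` has
`μ`-measure at most `c`, so for `α = q/(1-q)` and `c = W t / 2` one gets
`(W t / 2)^(α+1) ≤ ∫_{s>t} W(s)^α dμ`. Multiplying by `V(t)^α ≤ V(s)^α` and taking the power
`1/α` bounds each value `W(t)^(1/q) V(t)` by `2^(1/q)` times the right-hand side.
-/

open MeasureTheory Set
open scoped ENNReal

/-- The interval `(x,y) ⊆ (0,∞)` for extended-real endpoints, as a set of reals. -/
noncomputable def ooE (a b : ℝ≥0∞) : Set ℝ :=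
  {t : ℝ | a < ENNReal.ofReal t ∧ ENNReal.ofReal t < b}

namespace MeasureTheory

theorem measure_Ioi_antitone (μ : Measure ℝ) : Antitone fun s => μ (Ioi s) :=
  fun _ _ h => measure_mono (Ioi_subset_Ioi h)

variable {μ : Measure ℝ} [NullSingletonClass μ]

theorem measure_setOf_measure_Ioi_le (c : ℝ≥0∞) : μ {s | μ (Ioi s) ≤ c} ≤ c := by
  set U := {s | μ (Ioi s) ≤ c}
  -- `U` is an upper set: apart from a possible least element it is covered by rational rays.
  have hU : U ⊆ (lowerBounds U ∩ U) ∪ ⋃ q : {q : ℚ // (q : ℝ) ∈ U}, Ioi (q : ℝ) := by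
    intro s hs
    by_cases hmin : s ∈ lowerBounds U
    · exact Or.inl ⟨hmin, hs⟩
    obtain ⟨s', hs', hs's⟩ : ∃ s' ∈ U, s' < s := by simpa [lowerBounds] using hmin
    obtain ⟨q, hs'q, hqs⟩ := exists_rat_btwn hs's
    exact Or.inr (mem_iUnion.2 ⟨⟨q, (measure_Ioi_antitone μ hs'q.le).trans hs'⟩, hqs⟩)
  have hmin : (lowerBounds U ∩ U).Subsingleton :=
    fun a ha b hb => le_antisymm (ha.1 hb.2) (hb.1 ha.2)
  have hdir : Directed (· ⊆ ·) fun q : {q : ℚ // (q : ℝ) ∈ U} => Ioi (q : ℝ) := by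
    rintro ⟨q₁, hq₁⟩ ⟨q₂, hq₂⟩
    refine ⟨⟨min q₁ q₂, ?_⟩, Ioi_subset_Ioi (by simp), Ioi_subset_Ioi (by simp)⟩
    rcases min_choice q₁ q₂ with h | h <;> rw [h] <;> assumption
  calc μ U ≤ μ (lowerBounds U ∩ U) + μ (⋃ q : {q : ℚ // (q : ℝ) ∈ U}, Ioi (q : ℝ)) :=
        (measure_mono hU).trans (measure_union_le _ _)
    _ ≤ c := by
        rw [hmin.measure_zero, zero_add, hdir.measure_iUnion]
        exact iSup_le fun q => q.2

theorem rpow_mul_measure_Ioi_sub_le {α : ℝ} (hα : 0 ≤ α) (t : ℝ) (c : ℝ≥0∞) :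
    c ^ α * (μ (Ioi t) - c) ≤ ∫⁻ s in Ioi t, μ (Ioi s) ^ α ∂μ := by
  set T := {s | c < μ (Ioi s)}
  have hT : MeasurableSet T := measurableSet_lt measurable_const (measure_Ioi_antitone μ).measurable
  have hsplit : μ (Ioi t) - c ≤ μ (Ioi t ∩ T) := by
    rw [tsub_le_iff_right]
    calc μ (Ioi t) ≤ μ (Ioi t ∩ T) + μ (Ioi t \ T) := measure_le_inter_add_sdiff _ _ _
      _ ≤ μ (Ioi t ∩ T) + c := by
          gcongr
          exact (measure_mono fun s (hs : s ∈ Ioi t \ T) => (not_lt.1 hs.2 : μ (Ioi s) ≤ c)).trans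
            (measure_setOf_measure_Ioi_le c)
  calc c ^ α * (μ (Ioi t) - c) ≤ c ^ α * μ (Ioi t ∩ T) := by gcongr
    _ = ∫⁻ _ in Ioi t ∩ T, c ^ α ∂μ := (setLIntegral_const _ _).symm
    _ ≤ ∫⁻ s in Ioi t ∩ T, μ (Ioi s) ^ α ∂μ :=
        setLIntegral_mono' (measurableSet_Ioi.inter hT) fun s hs =>
          ENNReal.rpow_le_rpow (le_of_lt hs.2) hα
    _ ≤ ∫⁻ s in Ioi t, μ (Ioi s) ^ α ∂μ := lintegral_mono_set inter_subset_left

theorem half_measure_Ioi_rpow_le {α : ℝ} (hα : 0 ≤ α) (t : ℝ) :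
    (μ (Ioi t) / 2) ^ (α + 1) ≤ ∫⁻ s in Ioi t, μ (Ioi s) ^ α ∂μ := by
  rcases eq_or_ne (μ (Ioi t)) ⊤ with htop | htop
  · have : ∫⁻ s in Ioi t, μ (Ioi s) ^ α ∂μ = ⊤ := by
      simpa [htop] using rpow_mul_measure_Ioi_sub_le (μ := μ) hα t 1
    rw [this]
    exact le_top
  · have := rpow_mul_measure_Ioi_sub_le (μ := μ) hα t (μ (Ioi t) / 2)
    rw [ENNReal.sub_half htop] at this
    rw [ENNReal.rpow_add_of_nonneg _ _ hα zero_le_one, ENNReal.rpow_one]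
    exact this

theorem half_measure_Ioi_rpow_mul_le {α : ℝ} (hα : 0 ≤ α) {B : Set ℝ} (hB : ∀ᵐ s ∂μ, s ∈ B)
    {V : ℝ → ℝ≥0∞} (hV : MonotoneOn V B) {t : ℝ} (ht : t ∈ B) :
    (μ (Ioi t) / 2) ^ (α + 1) * V t ^ α ≤ ∫⁻ s, μ (Ioi s) ^ α * V s ^ α ∂μ :=
  calc (μ (Ioi t) / 2) ^ (α + 1) * V t ^ α
      ≤ (∫⁻ s in Ioi t, μ (Ioi s) ^ α ∂μ) * V t ^ α := by
        gcongr; exact half_measure_Ioi_rpow_le hα t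
    _ ≤ ∫⁻ s in Ioi t, μ (Ioi s) ^ α * V t ^ α ∂μ := lintegral_mul_const_le _ _
    _ ≤ ∫⁻ s in Ioi t, μ (Ioi s) ^ α * V s ^ α ∂μ := by
        refine lintegral_mono_ae ?_
        filter_upwards [ae_restrict_mem measurableSet_Ioi, ae_restrict_of_ae hB] with s hts hs
        gcongr
        exact hV ht hs (le_of_lt hts)
    _ ≤ ∫⁻ s, μ (Ioi s) ^ α * V s ^ α ∂μ := setLIntegral_le_lintegral _ _

theorem measure_Ioi_rpow_mul_le {α : ℝ} (hα : 0 < α) {B : Set ℝ} (hB : ∀ᵐ s ∂μ, s ∈ B)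
    {V : ℝ → ℝ≥0∞} (hV : MonotoneOn V B) {t : ℝ} (ht : t ∈ B) :
    μ (Ioi t) ^ ((α + 1) / α) * V t
      ≤ 2 ^ ((α + 1) / α) * (∫⁻ s, μ (Ioi s) ^ α * V s ^ α ∂μ) ^ (1 / α) := by
  have hp : 0 ≤ (α + 1) / α := by positivity
  calc μ (Ioi t) ^ ((α + 1) / α) * V t
      = (2 * (μ (Ioi t) / 2)) ^ ((α + 1) / α) * V t := by
        rw [ENNReal.mul_div_cancel two_ne_zero ENNReal.ofNat_ne_top]
    _ = 2 ^ ((α + 1) / α) * ((μ (Ioi t) / 2) ^ (α + 1) * V t ^ α) ^ (1 / α) := by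
        rw [ENNReal.mul_rpow_of_nonneg _ _ hp, ENNReal.mul_rpow_of_nonneg _ _ (by positivity),
          ← ENNReal.rpow_mul, ← ENNReal.rpow_mul, mul_one_div, mul_one_div_cancel hα.ne',
          ENNReal.rpow_one, mul_assoc]
    _ ≤ 2 ^ ((α + 1) / α) * (∫⁻ s, μ (Ioi s) ^ α * V s ^ α ∂μ) ^ (1 / α) := by
        gcongr
        exact half_measure_Ioi_rpow_mul_le hα.le hB hV ht

end MeasureTheory

theorem measurableSet_ooE (a b : ℝ≥0∞) : MeasurableSet (ooE a b) :=
  ENNReal.measurable_ofReal measurableSet_Ioo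

/-- For `0 < q < 1`, any `x < y` in `[0,∞]`, a weight `u` on `(x,y)` and any
non-negative non-decreasing `V`,
`ess sup_{t∈(x,y)} (∫_t^y u)^{1/q} V(t)
  ≤ C (∫_x^y (∫_s^y u)^{q/(1−q)} u(s) V(s)^{q/(1−q)} ds)^{(1−q)/q}`,
with `C` depending only on `q`. -/
theorem stmt15 (q : ℝ) (hq0 : 0 < q) (hq1 : q < 1) :
    ∃ C : ℝ≥0∞, 0 < C ∧ C ≠ ⊤ ∧
      ∀ (x y : ℝ≥0∞), x < y →
      ∀ (u V : ℝ → ℝ≥0∞), Measurable u →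
        (∀ᵐ t ∂(volume.restrict (ooE x y)), 0 < u t ∧ u t ≠ ⊤) →
        MonotoneOn V (ooE x y) →
        essSup (fun t => (∫⁻ s in ooE x y ∩ Ioi t, u s) ^ (1 / q) * V t)
            (volume.restrict (ooE x y))
          ≤ C * (∫⁻ s in ooE x y,
              (∫⁻ σ in ooE x y ∩ Ioi s, u σ) ^ (q / (1 - q)) * u s
                * V s ^ (q / (1 - q))) ^ ((1 - q) / q) := by
  refine ⟨2 ^ (1 / q), ENNReal.rpow_pos two_pos ENNReal.ofNat_ne_top,
    ENNReal.rpow_ne_top_of_nonneg (by positivity) ENNReal.ofNat_ne_top, ?_⟩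
  intro x y _ u V hu _ hV
  set B := ooE x y
  set μ := (volume.restrict B).withDensity u
  have hμ : ∀ t, ∫⁻ s in B ∩ Ioi t, u s = μ (Ioi t) := fun t => by
    rw [withDensity_apply _ measurableSet_Ioi, Measure.restrict_restrict measurableSet_Ioi,
      inter_comm]
  have hμB : ∀ᵐ s ∂μ, s ∈ B :=
    withDensity_absolutelyContinuous _ _ (ae_restrict_mem (measurableSet_ooE x y))
  have hα : 0 < q / (1 - q) := div_pos hq0 (sub_pos.2 hq1)
  have hexp : (q / (1 - q) + 1) / (q / (1 - q)) = 1 / q := by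
    field_simp [(sub_pos.2 hq1).ne']
    ring
  simp only [hμ]
  refine essSup_le_of_ae_le _ (ae_restrict_of_forall_mem (measurableSet_ooE x y) fun t ht => ?_)
  calc μ (Ioi t) ^ (1 / q) * V t
      ≤ 2 ^ (1 / q)
          * (∫⁻ s, μ (Ioi s) ^ (q / (1 - q)) * V s ^ (q / (1 - q)) ∂μ) ^ ((1 - q) / q) := by
        simpa only [hexp, one_div_div] using measure_Ioi_rpow_mul_le hα hμB hV ht
    _ ≤ _ := by
        refine mul_le_mul_right (ENNReal.rpow_le_rpow ?_ (div_pos (sub_pos.2 hq1) hq0).le) _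
        refine (lintegral_withDensity_le_lintegral_mul _ hu _).trans_eq (lintegral_congr fun s => ?_)
        simp only [Pi.mul_apply]
        ring
end

section
/- The inequality (∫_0^∞ (∫_0^t f(s)^r v(s) ds)^{q/r} u(t) dt)^{1/q} ≤ C (∫_0^∞ (∫_t^∞ f(s) ds)^p w(t) dt)^{1/p} for all non-negative measurable f on (0,∞), with weights u, v, w and exponents 0 < p, q < ∞, can only hold with finite C for nontrivial weights when r ≤ 1; more precisely, if r > 1 then the validity of this inequality for all f ∈ M⁺ forces v = 0 a.e. (assuming u is not a.e. zero on any neighborhood of ∞ and w is locally integrable with ∫_0^∞ w > 0). -/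
/-!
Suppose `v` is not a.e. zero. Then for some `b > 0` and `δ > 0` the set `E ⊆ (0, b)` on which
`v ≥ δ` has positive measure. Test the inequality on `f = |S|⁻¹ 𝟙_S` for measurable `S ⊆ E`:
since `∫ f = 1` and `f` vanishes beyond `b`, the right-hand side is at most `C (∫_0^b w)^{1/p}`,
while for `t > b` the inner integral on the left is at least `δ |S|^{1 - r}`, so the left-hand side
is at least `δ^{1/r} (∫_b^∞ u)^{1/q} |S|^{(1-r)/r}`. For `r > 1` this blows up as `|S| → 0`, and
`E` has subsets of arbitrarily small positive measure.
-/

open MeasureTheory Set Filter Topology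
open scoped ENNReal NNReal

theorem exists_measure_setOf_inv_le_ne_zero {α : Type*} [MeasurableSpace α] {μ : Measure α}
    {v : α → ℝ≥0∞} (h : ¬ ∀ᵐ x ∂μ, v x = 0) : ∃ n : ℕ, μ {x | (n : ℝ≥0∞)⁻¹ ≤ v x} ≠ 0 := by
  by_contra! hn
  refine h (measure_mono_null (fun x hx => ?_) (measure_iUnion_null hn))
  obtain ⟨n, hn⟩ := ENNReal.exists_inv_nat_lt hx
  exact mem_iUnion.2 ⟨n, hn.le⟩

theorem exists_measure_inter_Ioo_ne_zero {μ : Measure ℝ} {s : Set ℝ}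
    (h : μ (s ∩ Ioi 0) ≠ 0) : ∃ b : ℝ, 0 < b ∧ μ (s ∩ Ioo 0 b) ≠ 0 := by
  obtain ⟨n, hn⟩ : ∃ n : ℕ, μ (s ∩ Ioo 0 n) ≠ 0 := by
    by_contra! hn
    refine h (measure_mono_null (fun x hx => ?_) (measure_iUnion_null hn))
    obtain ⟨n, hn⟩ := exists_nat_gt x
    exact mem_iUnion.2 ⟨n, hx.1, hx.2, hn⟩
  obtain ⟨x, -, hx⟩ := nonempty_of_measure_ne_zero hn
  exact ⟨n, hx.1.trans hx.2, hn⟩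

theorem exists_subset_volume_ne_zero_le {E : Set ℝ} (hE : MeasurableSet E) (h : volume E ≠ 0)
    {ε : ℝ≥0∞} (hε : 0 < ε) :
    ∃ S ⊆ E, MeasurableSet S ∧ volume S ≠ 0 ∧ volume S ≤ ε := by
  obtain ⟨η, hη, hηε⟩ := ENNReal.lt_iff_exists_nnreal_btwn.1 hε
  have hη' : (0 : ℝ) < η := by exact_mod_cast hη
  obtain ⟨k, hk⟩ : ∃ k : ℤ, volume (E ∩ Ico (k • (η : ℝ)) ((k + 1) • (η : ℝ))) ≠ 0 := by
    by_contra! hk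
    refine h (measure_mono_null (fun x hx => ?_) (measure_iUnion_null hk))
    have hx' : x ∈ ⋃ k : ℤ, Ico (k • (η : ℝ)) ((k + 1) • (η : ℝ)) := by
      rw [iUnion_Ico_zsmul hη']; trivial
    obtain ⟨k, hk⟩ := mem_iUnion.1 hx'
    exact mem_iUnion.2 ⟨k, hx, hk⟩
  refine ⟨_, inter_subset_left, hE.inter measurableSet_Ico, hk, ?_⟩
  calc volume (E ∩ Ico (k • (η : ℝ)) ((k + 1) • (η : ℝ)))
      ≤ volume (Ico (k • (η : ℝ)) ((k + 1) • (η : ℝ))) := measure_mono inter_subset_right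
    _ = η := by
      rw [Real.volume_Ico, add_smul, one_smul, add_sub_cancel_left, ENNReal.ofReal_coe_nnreal]
    _ ≤ ε := hηε.le

theorem ENNReal.eventually_lt_mul_rpow_nhds_zero {K L : ℝ≥0∞} {a : ℝ} (hK : K ≠ ⊤) (hL : L ≠ 0)
    (ha : a < 0) : ∀ᶠ m in 𝓝 0, K < L * m ^ a := by
  have hlim : Tendsto (fun m : ℝ≥0∞ => L * m ^ a) (𝓝 0) (𝓝 ⊤) := by
    have := (ENNReal.continuous_rpow_const (y := a)).tendsto 0
    rw [ENNReal.zero_rpow_of_neg ha] at this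
    simpa only [ENNReal.mul_top hL] using
      ENNReal.Tendsto.const_mul (a := L) this (Or.inl ENNReal.top_ne_zero)
  exact hlim.eventually (lt_mem_nhds hK.lt_top)

noncomputable def hardyFunctional (r q : ℝ) (v u f : ℝ → ℝ≥0∞) : ℝ≥0∞ :=
  ∫⁻ t in Ioi 0, (∫⁻ s in Ioo 0 t, f s ^ r * v s) ^ (q / r) * u t

noncomputable def copsonFunctional (p : ℝ) (w f : ℝ → ℝ≥0∞) : ℝ≥0∞ :=
  ∫⁻ t in Ioi 0, (∫⁻ s in Ioi t, f s) ^ p * w t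

theorem copsonFunctional_le {p : ℝ} (hp : 0 < p) (w : ℝ → ℝ≥0∞) {f : ℝ → ℝ≥0∞} {b : ℝ}
    (hf : ∫⁻ x, f x ≤ 1) (hfb : ∀ x, b ≤ x → f x = 0) :
    copsonFunctional p w f ≤ ∫⁻ t in Ioo 0 b, w t := by
  have hle : ∀ t ∈ Ioi (0 : ℝ), (∫⁻ s in Ioi t, f s) ^ p * w t ≤ (Ioo 0 b).indicator w t := by
    intro t ht
    rcases lt_or_ge t b with htb | hbt
    · rw [indicator_of_mem (show t ∈ Ioo 0 b from ⟨ht, htb⟩)]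
      have h1 : ∫⁻ s in Ioi t, f s ≤ 1 := (setLIntegral_le_lintegral _ _).trans hf
      calc (∫⁻ s in Ioi t, f s) ^ p * w t ≤ 1 * w t := by
            gcongr; exact ENNReal.rpow_le_one h1 hp.le
        _ = w t := one_mul _
    · have h0 : ∫⁻ s in Ioi t, f s = 0 :=
        (setLIntegral_congr_fun measurableSet_Ioi fun s hs => hfb s (hbt.trans hs.le)).trans
          lintegral_zero
      rw [h0, ENNReal.zero_rpow_of_pos hp, zero_mul]
      exact zero_le
  calc copsonFunctional p w f ≤ ∫⁻ t in Ioi 0, (Ioo 0 b).indicator w t :=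
        setLIntegral_mono' measurableSet_Ioi hle
    _ ≤ ∫⁻ t, (Ioo 0 b).indicator w t := setLIntegral_le_lintegral _ _
    _ = ∫⁻ t in Ioo 0 b, w t := lintegral_indicator measurableSet_Ioo w

theorem rpow_mul_lintegral_Ioi_le_hardyFunctional {r q : ℝ} (hqr : 0 ≤ q / r)
    (v u f : ℝ → ℝ≥0∞) {b : ℝ} (hb : 0 ≤ b) {A : ℝ≥0∞}
    (hA : ∀ t ∈ Ioi b, A ≤ ∫⁻ s in Ioo 0 t, f s ^ r * v s) :
    A ^ (q / r) * ∫⁻ t in Ioi b, u t ≤ hardyFunctional r q v u f :=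
  calc A ^ (q / r) * ∫⁻ t in Ioi b, u t ≤ ∫⁻ t in Ioi b, A ^ (q / r) * u t :=
        lintegral_const_mul_le _ _
    _ ≤ ∫⁻ t in Ioi b, (∫⁻ s in Ioo 0 t, f s ^ r * v s) ^ (q / r) * u t :=
        setLIntegral_mono' measurableSet_Ioi fun t ht => by gcongr; exact hA t ht
    _ ≤ hardyFunctional r q v u f := lintegral_mono_set (Ioi_subset_Ioi hb)

theorem rpow_mul_rpow_le_of_hardy_le_copson {r p q : ℝ} (hr : 0 < r) (hp : 0 < p) (hq : 0 < q)
    {u v w : ℝ → ℝ≥0∞} {C : ℝ≥0∞}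
    (hineq : ∀ f : ℝ → ℝ≥0∞, Measurable f →
      hardyFunctional r q v u f ^ (1 / q) ≤ C * copsonFunctional p w f ^ (1 / p))
    {b : ℝ} (hb : 0 ≤ b) {δ : ℝ≥0∞} {S : Set ℝ} (hS : MeasurableSet S) (hSb : S ⊆ Ioo 0 b)
    (hδ : ∀ x ∈ S, δ ≤ v x) (hS0 : volume S ≠ 0) (hStop : volume S ≠ ⊤) :
    δ ^ (1 / r) * (∫⁻ t in Ioi b, u t) ^ (1 / q) * volume S ^ ((1 - r) / r)
      ≤ C * (∫⁻ t in Ioo 0 b, w t) ^ (1 / p) := by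
  set m := volume S
  set f := S.indicator fun _ => m⁻¹
  have hf1 : ∫⁻ x, f x = 1 := by
    rw [lintegral_indicator_const hS, ENNReal.inv_mul_cancel hS0 hStop]
  have hfb : ∀ x, b ≤ x → f x = 0 := fun x hx =>
    indicator_of_notMem (fun hxS => (hSb hxS).2.not_ge hx) _
  have hA : ∀ t ∈ Ioi b, δ * m ^ (1 - r) ≤ ∫⁻ s in Ioo 0 t, f s ^ r * v s := by
    intro t ht
    calc δ * m ^ (1 - r) = ∫⁻ _ in S, m⁻¹ ^ r * δ := by
          rw [setLIntegral_const, ENNReal.rpow_sub _ _ hS0 hStop, ENNReal.rpow_one,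
            ENNReal.inv_rpow, div_eq_mul_inv]
          ring
      _ ≤ ∫⁻ s in S, f s ^ r * v s :=
          setLIntegral_mono' hS fun s hs => by
            rw [show f s = m⁻¹ from indicator_of_mem hs _]
            gcongr
            exact hδ s hs
      _ ≤ ∫⁻ s in Ioo 0 t, f s ^ r * v s :=
          lintegral_mono_set (hSb.trans (Ioo_subset_Ioo_right (le_of_lt ht)))
  calc δ ^ (1 / r) * (∫⁻ t in Ioi b, u t) ^ (1 / q) * m ^ ((1 - r) / r)
      = ((δ * m ^ (1 - r)) ^ (q / r) * ∫⁻ t in Ioi b, u t) ^ (1 / q) := by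
        rw [ENNReal.mul_rpow_of_nonneg _ _ (by positivity), ← ENNReal.rpow_mul,
          ENNReal.mul_rpow_of_nonneg _ _ (by positivity), ← ENNReal.rpow_mul,
          show q / r * (1 / q) = 1 / r by field_simp, ← mul_one_div (1 - r) r]
        ring
    _ ≤ hardyFunctional r q v u f ^ (1 / q) := by
        gcongr
        exact rpow_mul_lintegral_Ioi_le_hardyFunctional (by positivity) v u f hb hA
    _ ≤ C * copsonFunctional p w f ^ (1 / p) := hineq f (measurable_const.indicator hS)
    _ ≤ C * (∫⁻ t in Ioo 0 b, w t) ^ (1 / p) := by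
        gcongr
        exact copsonFunctional_le hp w hf1.le hfb

theorem stmt16_general (r p q : ℝ) (hr : 1 < r) (hp : 0 < p) (hq : 0 < q)
    (u v w : ℝ → ℝ≥0∞) (hv : Measurable v)
    (huo : ∀ T : ℝ, 0 < T → 0 < ∫⁻ t in Ioi T, u t)
    (hwloc : ∀ T : ℝ, 0 < T → (∫⁻ t in Ioo (0:ℝ) T, w t) ≠ ⊤)
    (C : ℝ≥0∞) (hC : C ≠ ⊤)
    (hineq : ∀ f : ℝ → ℝ≥0∞, Measurable f →
      (∫⁻ t in Ioi (0:ℝ), (∫⁻ s in Ioo (0:ℝ) t, f s ^ r * v s) ^ (q / r) * u t) ^ (1 / q)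
        ≤ C * (∫⁻ t in Ioi (0:ℝ), (∫⁻ s in Ioi t, f s) ^ p * w t) ^ (1 / p)) :
    ∀ᵐ t ∂(volume.restrict (Ioi (0:ℝ))), v t = 0 := by
  by_contra hne
  obtain ⟨n, hn⟩ := exists_measure_setOf_inv_le_ne_zero hne
  rw [Measure.restrict_apply' measurableSet_Ioi] at hn
  obtain ⟨b, hb, hE⟩ := exists_measure_inter_Ioo_ne_zero hn
  have hδ : (n : ℝ≥0∞)⁻¹ ≠ 0 := ENNReal.inv_ne_zero.2 (ENNReal.natCast_ne_top n)
  have hL : (n : ℝ≥0∞)⁻¹ ^ (1 / r) * (∫⁻ t in Ioi b, u t) ^ (1 / q) ≠ 0 :=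
    mul_ne_zero (ENNReal.rpow_pos_of_nonneg (pos_iff_ne_zero.2 hδ) (by positivity)).ne'
      (ENNReal.rpow_pos_of_nonneg (huo b hb) (by positivity)).ne'
  have hK : C * (∫⁻ t in Ioo 0 b, w t) ^ (1 / p) ≠ ⊤ :=
    ENNReal.mul_ne_top hC (ENNReal.rpow_ne_top_of_nonneg (by positivity) (hwloc b hb))
  have ha : (1 - r) / r < 0 := div_neg_of_neg_of_pos (by linarith) (by linarith)
  obtain ⟨ε, hε, hsmall⟩ := ENNReal.nhds_zero_basis_Iic.eventually_iff.1
    (ENNReal.eventually_lt_mul_rpow_nhds_zero hK hL ha)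
  obtain ⟨S, hSE, hS, hS0, hSε⟩ :=
    exists_subset_volume_ne_zero_le ((hv measurableSet_Ici).inter measurableSet_Ioo) hE hε
  have hSb : S ⊆ Ioo 0 b := hSE.trans inter_subset_right
  have hStop : volume S ≠ ⊤ := (measure_mono hSb).trans_lt measure_Ioo_lt_top |>.ne
  exact (hsmall hSε).not_ge <| rpow_mul_rpow_le_of_hardy_le_copson (by linarith) hp hq hineq
    hb.le hS hSb (fun x hx => (hSE hx).1) hS0 hStop

/-- Triviality of the Copson-to-Hardy inequality for `r > 1`: if `r > 1`,
`u` is not a.e. zero on any neighbourhood of `∞`, `w` is locally integrable with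
`∫_0^∞ w > 0`, and the inequality
`(∫_0^∞ (∫_0^t f^r v)^{q/r} u dt)^{1/q} ≤ C (∫_0^∞ (∫_t^∞ f)^p w dt)^{1/p}`
holds with a finite constant `C` for all non-negative measurable `f`,
then `v = 0` a.e. on `(0,∞)`. -/
theorem stmt16 (r p q : ℝ) (hr : 1 < r) (hp : 0 < p) (hq : 0 < q)
    (u v w : ℝ → ℝ≥0∞) (hu : Measurable u) (hv : Measurable v) (hw : Measurable w)
    (hufin : ∀ᵐ t ∂(volume.restrict (Ioi (0:ℝ))), u t ≠ ⊤)
    (hvfin : ∀ᵐ t ∂(volume.restrict (Ioi (0:ℝ))), v t ≠ ⊤)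
    (huo : ∀ T : ℝ, 0 < T → 0 < ∫⁻ t in Ioi T, u t)
    (hwloc : ∀ T : ℝ, 0 < T → (∫⁻ t in Ioo (0:ℝ) T, w t) ≠ ⊤)
    (hwpos : 0 < ∫⁻ t in Ioi (0:ℝ), w t)
    (C : ℝ≥0∞) (hC : C ≠ ⊤)
    (hineq : ∀ f : ℝ → ℝ≥0∞, Measurable f →
      (∫⁻ t in Ioi (0:ℝ), (∫⁻ s in Ioo (0:ℝ) t, f s ^ r * v s) ^ (q / r) * u t) ^ (1 / q)
        ≤ C * (∫⁻ t in Ioi (0:ℝ), (∫⁻ s in Ioi t, f s) ^ p * w t) ^ (1 / p)) :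
    ∀ᵐ t ∂(volume.restrict (Ioi (0:ℝ))), v t = 0 :=
  stmt16_general r p q hr hp hq u v w hv huo hwloc C hC hineq
end
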